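/- arXiv:2003.04280 — 2 statements merged into one kernel-verified Lean document; each statement's English description precedes it below -/
import Mathlib

section
/- Let k ≥ 5 be an integer and let T_0,…,T_q be a one-phase k-bulk tree sequence. Then q ≤ ⌈log₂|T_0| / (k−2)⌉. -/
attribute [local instance] Classical.propDecidable

/-- A binary tree with real-number node values. -/
inductive BT : Type
  | leaf : BT
  | node : BT → ℝ → BT → BT

namespace BT

/-- The set of values stored in the tree. -/
noncomputable def nodes : BT → Finset ℝ
  | .leaf => ∅
  | .node l v r => insert v (nodes l ∪ nodes r)

/-- The signature of `x` in the tree: the bit string of the search path for `x`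
(`false` = step to a left child, `true` = step to a right child). For a node `x` of the
tree, its length is the depth `d_T(x)`. -/
noncomputable def sig : BT → ℝ → List Bool
  | .leaf, _ => []
  | .node l v r, x =>
    if x < v then false :: sig l x
    else if v < x then true :: sig r x
    else []

/-- The number of nodes of the tree. -/
def size : BT → ℕ
  | .leaf => 0
  | .node l _ r => size l + size r + 1

/-- The binary-search-tree property: all values in a left subtree are smaller than the
value at the node, all values in a right subtree are larger. -/
def isBST : BT → Prop
  | .leaf => True
  | .node l v r => (∀ x ∈ nodes l, x < v) ∧ (∀ x ∈ nodes r, v < x) ∧ isBST l ∧ isBST r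

/-- The height of the tree: the maximum depth of a node (0 for the empty tree). -/
noncomputable def height (t : BT) : ℕ := (nodes t).sup fun x => (sig t x).length

/-- The subtree rooted at the node holding the value `x` (a leaf if `x` is absent). -/
noncomputable def subtreeAt : BT → ℝ → BT
  | .leaf, _ => .leaf
  | .node l v r, x =>
    if x < v then subtreeAt l x
    else if v < x then subtreeAt r x
    else .node l v r

end BT

/-- `Chunks a X Y` : the finite set `X` `a`-chunks the finite set `Y`, i.e. every
`(a+1)`-element subset `S ⊆ Y` admits an `x ∈ X` with `min S ≤ x ≤ max S`
(equivalently, `s₁ ≤ x ≤ s₂` for some `s₁, s₂ ∈ S`). -/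
def Chunks (a : ℕ) (X Y : Finset ℝ) : Prop :=
  ∀ S ⊆ Y, S.card = a + 1 → ∃ x ∈ X, (∃ s ∈ S, s ≤ x) ∧ ∃ s ∈ S, x ≤ s

namespace BT

/-- Standard binary search tree insertion: the new value is attached at the external
node ending its search path. -/
noncomputable def ins : BT → ℝ → BT
  | .leaf, x => .node .leaf x .leaf
  | .node l v r, x =>
    if x < v then .node (ins l x) v r
    else if v < x then .node l v (ins r x)
    else .node l v r

end BT

/-- `t'` is obtained from `t` by `BulkInsert(I)`: inserting the elements of the finite
set `I` one by one, in some order, by standard binary search tree insertion. -/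
def BulkInsertRel (t : BT) (I : Finset ℝ) (t' : BT) : Prop :=
  ∃ l : List ℝ, l.Nodup ∧ l.toFinset = I ∧ t' = l.foldl BT.ins t

namespace BT

/-- Delete the largest value of the tree (following the recursive deletion rule) and
return it together with the remaining tree. -/
noncomputable def extractMax : BT → Option (ℝ × BT)
  | .leaf => none
  | .node l v .leaf =>
    match extractMax l with
    | none => some (v, .leaf)
    | some (m, l') => some (v, .node l' m .leaf)
  | .node l v (.node rl rv rr) =>
    match extractMax (.node rl rv rr) with
    | none => some (v, l)
    | some (m, r') => some (m, .node l v r')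

/-- Delete the smallest value of the tree (following the recursive deletion rule) and
return it together with the remaining tree. -/
noncomputable def extractMin : BT → Option (ℝ × BT)
  | .leaf => none
  | .node .leaf v r =>
    match extractMin r with
    | none => some (v, .leaf)
    | some (m, r') => some (v, .node .leaf m r')
  | .node (.node ll lv lr) v r =>
    match extractMin (.node ll lv lr) with
    | none => some (v, r)
    | some (m, l') => some (m, .node l' v r)

/-- Recursive deletion of the value `x`: if the node holding `x` is a leaf, remove it;
otherwise, if it has a left child, recursively delete the largest value of its left
subtree and replace `x` with it; otherwise recursively delete the smallest value of its
right subtree and replace `x` with it. -/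
noncomputable def delete : BT → ℝ → BT
  | .leaf, _ => .leaf
  | .node l v r, x =>
    if x < v then .node (delete l x) v r
    else if v < x then .node l v (delete r x)
    else
      match extractMax l with
      | some (m, l') => .node l' m r
      | none =>
        match extractMin r with
        | some (m, r') => .node .leaf m r'
        | none => .leaf

end BT

/-- `t'` is obtained from `t` by `BulkDelete(D)`: deleting the elements of the finite
set `D` one by one, in some order. -/
def BulkDeleteRel (t : BT) (D : Finset ℝ) (t' : BT) : Prop :=
  ∃ l : List ℝ, l.Nodup ∧ l.toFinset = D ∧ t' = l.foldl BT.delete t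

namespace BT

/-- `Split(x)`: split a binary search tree along the search path of `x` into the two
binary search trees on `{z ∈ V(T) : z < x}` and `{z ∈ V(T) : z > x}`. -/
noncomputable def split : BT → ℝ → BT × BT
  | .leaf, _ => (.leaf, .leaf)
  | .node l v r, x =>
    if x < v then
      ((split l x).1, .node (split l x).2 v r)
    else if v < x then
      (.node l v (split r x).1, (split r x).2)
    else (l, r)

end BT

namespace BT

/-- In-order (sorted, for a binary search tree) list of the values in the tree. -/
def inorder : BT → List ℝ
  | .leaf => []
  | .node l v r => inorder l ++ v :: inorder r

/-- `MultiSplit`: split a tree at an increasing list of values by splitting at the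
median value and recursing on both sides; returns the ordered list of resulting trees. -/
noncomputable def multiSplit : BT → List ℝ → List BT
  | t, [] => [t]
  | t, x₀ :: xs' =>
    multiSplit (split t ((x₀ :: xs').getD (((x₀ :: xs').length + 1) / 2 - 1) 0)).1
        ((x₀ :: xs').take (((x₀ :: xs').length + 1) / 2 - 1)) ++
    multiSplit (split t ((x₀ :: xs').getD (((x₀ :: xs').length + 1) / 2 - 1) 0)).2
        ((x₀ :: xs').drop (((x₀ :: xs').length + 1) / 2))
termination_by _ xs => xs.length
decreasing_by
  · simp [List.length_take]; omega
  · simp [List.length_drop]; omega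

/-- Replace the external (leaf) positions of a tree, from left to right, by the trees of
the given list (this is the order consistent with the binary search tree property);
also returns the unused trees of the list. -/
def glue : BT → List BT → BT × List BT
  | .leaf, ts => (ts.headD .leaf, ts.tail)
  | .node l v r, ts =>
    ((.node (glue l ts).1 v (glue r (glue l ts).2).1), (glue r (glue l ts).2).2)

/-- The ordered list of subtrees hanging below depth `k`: one (possibly empty) tree for
each gap between consecutive nodes of depth `< k`; these are the trees of the forest
`T − Z` where `Z` is the set of nodes of depth `< k`. -/
def slots : ℕ → BT → List BT
  | 0, t => [t]
  | _ + 1, .leaf => [.leaf]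
  | k + 1, .node l _ r => slots k l ++ slots k r

/-- The set `Z` of nodes of the tree of depth less than `k`. -/
noncomputable def shallowNodes (t : BT) (k : ℕ) : Finset ℝ :=
  (nodes t).filter fun x => (sig t x).length < k

/-- The list `X = x_1, …, x_{2^k − 1}` where `x_j` is the element of rank
`⌊j·|t| / 2^k⌋` in the sorted order of the values of `t`. -/
noncomputable def rankElems (t : BT) (k : ℕ) : List ℝ :=
  (List.range (2 ^ k - 1)).map fun j => (inorder t).getD ((j + 1) * size t / 2 ^ k) 0

/-- The ordered list of trees obtained by applying `MultiSplit` to each tree of the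
forest `t − Z`, each with the increasing list of the elements of `X` it contains. -/
noncomputable def balParts (t : BT) (k : ℕ) : List BT :=
  (slots k t).flatMap fun ti =>
    multiSplit ti ((inorder ti).filter fun x => x ∈ rankElems t k)

/-- `t` is a perfectly balanced binary search tree on the finite set `s`: its height
equals `⌊log₂ |t|⌋`. -/
def IsPerfBalBST (s : Finset ℝ) (t : BT) : Prop :=
  isBST t ∧ nodes t = s ∧ height t = Nat.log 2 (size t)

/-- `IsBalanceResult k tx s'` : `s'` is a possible result of applying `Balance(·, k)` to
the (sub)tree `tx`: if `|tx| < 2^k`, `s'` is a perfectly balanced binary search tree on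
the values of `tx`; otherwise `s'` is obtained by attaching, at the external positions
of a perfectly balanced binary search tree on `Z ∪ X`, the trees obtained by the
`MultiSplit`s of the trees of the forest `tx − Z`. -/
def IsBalanceResult (k : ℕ) (tx : BT) (s' : BT) : Prop :=
  if size tx < 2 ^ k then IsPerfBalBST (nodes tx) s'
  else
    ∃ t0 : BT,
      IsPerfBalBST (shallowNodes tx k ∪ (rankElems tx k).toFinset) t0 ∧
      s' = (glue t0 (balParts tx k)).1

/-- Replace the subtree rooted at the node holding `x` by `s`. -/
noncomputable def replaceAt : BT → ℝ → BT → BT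
  | .leaf, _, _ => .leaf
  | .node l v r, x, s =>
    if x < v then .node (replaceAt l x s) v r
    else if v < x then .node l v (replaceAt r x s)
    else s

/-- `BalanceRel t x k t'` : `t'` is a possible result of applying `Balance(x, k)` to `t`,
i.e. of replacing the subtree of `t` rooted at `x` by a result of `Balance(·, k)`. -/
def BalanceRel (t : BT) (x : ℝ) (k : ℕ) (t' : BT) : Prop :=
  ∃ s' : BT, IsBalanceResult k (subtreeAt t x) s' ∧ t' = replaceAt t x s'

/-- `BulkBalanceRel k θ t t'` : `t'` is a possible result of applying `BulkBalance(θ, k)`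
to `t`, i.e. of applying `Balance(x, k)` to every node `x` of depth `θ` in `t` (a no-op
if there is no such node). -/
def BulkBalanceRel (k : ℕ) : ℕ → BT → BT → Prop
  | 0, t, t' => (t = .leaf ∧ t' = .leaf) ∨ IsBalanceResult k t t'
  | _ + 1, .leaf, t' => t' = .leaf
  | θ + 1, .node l v r, t' =>
      ∃ l' r' : BT, BulkBalanceRel k θ l l' ∧ BulkBalanceRel k θ r r' ∧ t' = .node l' v r'

end BT

/-- `T 0, …, T q` is a one-phase `k`-bulk tree sequence: the node sets form a
1-chunking sequence of non-empty finite sets, and for each `y < q` one has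
`h(T_y) > y·(k+1)` and `T (y+1)` is obtained from `T y` by applying
`BulkBalance(y·(k+1), k)`, then `BulkInsert` of the new values, then `BulkDelete` of
the removed values. -/
def OnePhaseSeq (k q : ℕ) (T : ℕ → BT) : Prop :=
  (∀ y ≤ q, (T y).isBST) ∧
  (∀ y ≤ q, (T y).nodes.Nonempty) ∧
  (∀ y < q, Chunks 1 (T y).nodes (T (y + 1)).nodes ∧ Chunks 1 (T (y + 1)).nodes (T y).nodes) ∧
  (∀ y < q, (T y).height > y * (k + 1) ∧
    ∃ t₁ t₂ : BT,
      BT.BulkBalanceRel k (y * (k + 1)) (T y) t₁ ∧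
      BulkInsertRel t₁ ((T (y + 1)).nodes \ (T y).nodes) t₂ ∧
      BulkDeleteRel t₂ ((T y).nodes \ (T (y + 1)).nodes) (T (y + 1)))

/-!
Write `m_y` for the largest size of a subtree of `T_y` hanging at depth `y (k + 1)`
(`maxSlotSize`). `BulkBalance(y (k + 1), k)` rebuilds each such subtree `S` so that its subtrees
at relative depth `k + 1` are pieces of `S` between consecutive rank elements, of size at most
`|S| / 2^k`. By 1-chunking, two new values are separated by an old value, which then lies in the
same subtree as they do, so `BulkInsert` at most doubles a subtree (plus one), and `BulkDelete`
never enlarges one. Hence `m_{y+1} ≤ 2 ⌊m_y / 2^k⌋ + 1`, while `h(T_{q-1}) > (q-1)(k+1)` gives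
`m_{q-1} ≥ 2`; unwinding the recurrence, `|T_0| = m_0 ≥ 2^{(k-1)(q-1)+1}`.
-/

theorem Finset.card_le_card_add_one_of_separated {α : Type*} [LinearOrder α] (A B : Finset α)
    (h : ∀ u ∈ B, ∀ w ∈ B, u < w → ∃ x ∈ A, u < x ∧ x < w) : B.card ≤ A.card + 1 := by
  induction B using Finset.induction_on_max generalizing A with
  | empty => simp
  | insert m B hlt ih =>
    rcases B.eq_empty_or_nonempty with rfl | hB
    · simp
    obtain ⟨x, hxA, hx, -⟩ := h _ (mem_insert_of_mem (B.max'_mem hB)) m (mem_insert_self m B)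
      (hlt _ (B.max'_mem hB))
    have hsep : ∀ u ∈ B, ∀ w ∈ B, u < w → ∃ x' ∈ A.erase x, u < x' ∧ x' < w := by
      intro u hu w hw huw
      obtain ⟨x', hx'A, hux', hx'w⟩ := h u (mem_insert_of_mem hu) w (mem_insert_of_mem hw) huw
      exact ⟨x', mem_erase.2 ⟨(hx'w.trans_le ((B.le_max' w hw).trans hx.le)).ne, hx'A⟩, hux', hx'w⟩
    have hB := ih (A.erase x) hsep
    rw [card_erase_of_mem hxA] at hB
    rw [card_insert_of_notMem fun hm => (hlt m hm).false]
    have := card_pos.2 ⟨x, hxA⟩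
    omega

theorem Nat.exists_mul_div_mem_Ico {c n a m : ℕ} (hc : 0 < c) (hm : n / c < m) (ha : a + m ≤ n) :
    ∃ j < c - 1, (j + 1) * n / c ∈ Finset.Ico a (a + m) := by
  have hn : 0 < n := Nat.pos_of_ne_zero fun h => by subst h; simp at hm; omega
  have hdiv := Nat.div_add_mod (a * c) n
  have hmod := Nat.mod_lt (a * c) hn
  have hnc := Nat.lt_mul_div_succ n hc
  refine ⟨a * c / n, ?_, Finset.mem_Ico.2 ⟨?_, ?_⟩⟩
  · rw [Nat.div_lt_iff_lt_mul hn]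
    have : a * c + n < c * n := by nlinarith
    rw [Nat.sub_one_mul]; omega
  · rw [Nat.le_div_iff_mul_le hc]; nlinarith
  · calc (a * c / n + 1) * n / c ≤ (a * c + n) / c := Nat.div_le_div_right (by
        rw [add_mul, one_mul]; have := Nat.div_mul_le_self (a * c) n; omega)
      _ = a + n / c := by rw [add_comm, Nat.add_mul_div_right _ _ hc, add_comm]
      _ < a + m := by omega

theorem Nat.two_pow_add_le_of_two_pow_succ_le {e k m : ℕ} (h : 2 ^ (e + 1) ≤ 2 * (m / 2 ^ k) + 1) :
    2 ^ (e + k) ≤ m := by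
  have : 2 ^ e ≤ m / 2 ^ k := by rw [pow_succ] at h; omega
  rw [pow_add]
  exact (Nat.le_div_iff_mul_le (by positivity)).1 this

theorem Nat.two_pow_le_of_le_two_mul_div_add_one {k n : ℕ} {m : ℕ → ℕ} (hk : 1 ≤ k)
    (hstep : ∀ y < n, m (y + 1) ≤ 2 * (m y / 2 ^ k) + 1) (hlast : 2 ≤ m n) :
    2 ^ ((k - 1) * n + 1) ≤ m 0 := by
  induction n generalizing m with
  | zero => simpa using hlast
  | succ n ih =>
    have h1 := ih (m := fun y => m (y + 1)) (fun y hy => hstep (y + 1) (by omega)) hlast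
    have h0 := Nat.two_pow_add_le_of_two_pow_succ_le (h1.trans (hstep 0 (by omega)))
    convert h0 using 2
    rw [Nat.mul_succ]; omega

theorem List.Pairwise.eq_filter_lt_append_cons_filter_gt {α : Type*} [LinearOrder α] {L : List α}
    (h : L.Pairwise (· < ·)) {p : α} (hp : p ∈ L) :
    L = L.filter (· < p) ++ p :: L.filter (p < ·) := by
  obtain ⟨l₁, l₂, rfl⟩ := List.append_of_mem hp
  simp only [List.pairwise_append, List.pairwise_cons, List.mem_cons] at h
  have h₁ : ∀ z ∈ l₁, z < p := fun z hz => h.2.2 z hz p (.inl rfl)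
  have h₂ : ∀ z ∈ l₂, p < z := h.2.1.1
  have e₁ : l₁.filter (· < p) = l₁ := List.filter_eq_self.2 (by simpa using h₁)
  have e₂ : l₂.filter (· < p) = [] :=
    List.filter_eq_nil_iff.2 (by simpa using fun z hz => (h₂ z hz).le)
  have e₃ : l₁.filter (p < ·) = [] :=
    List.filter_eq_nil_iff.2 (by simpa using fun z hz => (h₁ z hz).le)
  have e₄ : l₂.filter (p < ·) = l₂ := List.filter_eq_self.2 (by simpa using h₂)
  simp [e₁, e₂, e₃, e₄]

theorem List.length_le_div_of_getD_mul_div_notMem {α : Type*} {l₁ l l₂ : List α} {c : ℕ}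
    (hc : 0 < c) (d : α)
    (h : ∀ j < c - 1, (l₁ ++ l ++ l₂).getD ((j + 1) * (l₁ ++ l ++ l₂).length / c) d ∉ l) :
    l.length ≤ (l₁ ++ l ++ l₂).length / c := by
  by_contra hlt
  obtain ⟨j, hj, hji⟩ := Nat.exists_mul_div_mem_Ico (a := l₁.length) hc (not_le.1 hlt) (by simp)
  obtain ⟨hi₁, hi₂⟩ := Finset.mem_Ico.1 hji
  refine h j hj ?_
  generalize (j + 1) * (l₁ ++ l ++ l₂).length / c = i at hi₁ hi₂
  rw [List.getD_eq_getElem _ _ (by simp; omega), List.getElem_append_left (by simp; omega),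
    List.getElem_append_right hi₁]
  exact List.getElem_mem _

namespace List

variable {α : Type*}

/-- `interlace [a₁, …, aₙ] [l₀, l₁, …, lₙ] = l₀ ++ a₁ :: l₁ ++ ⋯ ++ aₙ :: lₙ`: the in-order
traversal of a tree with in-order traversal `[a₁, …, aₙ]` whose `n + 1` external positions
carry trees with in-order traversals `l₀, …, lₙ`. -/
def interlace : List α → List (List α) → List α
  | [], ls => ls.headD []
  | a :: as, ls => ls.headD [] ++ a :: interlace as ls.tail

theorem interlace_append_cons (as₁ : List α) (a : α) (as₂ : List α) (ls : List (List α)) :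
    interlace (as₁ ++ a :: as₂) ls =
      interlace as₁ ls ++ a :: interlace as₂ (ls.drop (as₁.length + 1)) := by
  induction as₁ generalizing ls with
  | nil => simp [interlace, drop_one]
  | cons b as₁ ih =>
    simp only [cons_append, interlace, ih, append_assoc, cons_append, length_cons, ← drop_one,
      drop_drop]
    rw [add_comm 1]

theorem interlace_append_of_length_eq {as : List α} {ls₁ : List (List α)}
    (h : ls₁.length = as.length + 1) (ls₂ : List (List α)) :
    interlace as (ls₁ ++ ls₂) = interlace as ls₁ := by
  induction as generalizing ls₁ with
  | nil => obtain ⟨l, rfl⟩ := length_eq_one_iff.1 h; rfl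
  | cons a as ih =>
    obtain ⟨l, ls₁, rfl⟩ := exists_cons_of_length_eq_add_one h
    simp [interlace, ih (by simpa using h)]

theorem interlace_append_cons_append {as₁ : List α} {ls₁ : List (List α)}
    (h : ls₁.length = as₁.length + 1) (a : α) (as₂ : List α) (ls₂ : List (List α)) :
    interlace (as₁ ++ a :: as₂) (ls₁ ++ ls₂) = interlace as₁ ls₁ ++ a :: interlace as₂ ls₂ := by
  rw [interlace_append_cons, interlace_append_of_length_eq h, ← h, drop_left]

theorem interlace_eq_take_append_drop {as : List α} {i : ℕ} (hi : i < as.length)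
    {ls₁ : List (List α)} (h : ls₁.length = i + 1) (ls₂ : List (List α)) :
    interlace as (ls₁ ++ ls₂) =
      interlace (as.take i) ls₁ ++ as[i] :: interlace (as.drop (i + 1)) ls₂ := by
  conv_lhs => rw [← take_append_drop i as, drop_eq_getElem_cons hi]
  exact interlace_append_cons_append (by simp [h, hi.le]) _ _ _

theorem sublist_interlace (as : List α) (ls : List (List α)) : as <+ interlace as ls := by
  induction as generalizing ls with
  | nil => simp
  | cons a as ih => exact ((ih ls.tail).cons_cons a).trans (sublist_append_right _ _)

theorem length_interlace {as : List α} {ls : List (List α)} (h : ls.length = as.length + 1) :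
    (interlace as ls).length = as.length + (ls.map length).sum := by
  induction as generalizing ls with
  | nil => obtain ⟨l, rfl⟩ := length_eq_one_iff.1 h; simp [interlace]
  | cons a as ih =>
    obtain ⟨l, ls, rfl⟩ := exists_cons_of_length_eq_add_one h
    simp [interlace, ih (by simpa using h)]
    omega

theorem mem_interlace {as : List α} {ls : List (List α)} (h : ls.length = as.length + 1)
    {x : α} : x ∈ interlace as ls ↔ x ∈ as ∨ ∃ l ∈ ls, x ∈ l := by
  induction as generalizing ls with
  | nil => obtain ⟨l, rfl⟩ := length_eq_one_iff.1 h; simp [interlace]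
  | cons a as ih =>
    obtain ⟨l, ls, rfl⟩ := exists_cons_of_length_eq_add_one h
    simp [interlace, ih (by simpa using h)]
    tauto

theorem exists_eq_append_of_mem_interlace {as : List α} {ls : List (List α)}
    (h : ls.length = as.length + 1) {l : List α} (hl : l ∈ ls) :
    ∃ l₁ l₂, interlace as ls = l₁ ++ l ++ l₂ ∧ ∀ a ∈ as, a ∈ l₁ ∨ a ∈ l₂ := by
  induction as generalizing ls with
  | nil =>
    obtain ⟨l', rfl⟩ := length_eq_one_iff.1 h
    exact ⟨[], [], by simp_all [interlace], by simp⟩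
  | cons a as ih =>
    obtain ⟨l', ls, rfl⟩ := exists_cons_of_length_eq_add_one h
    rcases mem_cons.1 hl with rfl | hl
    · exact ⟨[], a :: interlace as ls, by simp [interlace],
        fun b hb => .inr (((sublist_interlace as ls).cons_cons a).subset hb)⟩
    obtain ⟨l₁, l₂, heq, has⟩ := ih (by simpa using h) hl
    refine ⟨l' ++ a :: l₁, l₂, by simp [interlace, heq], ?_⟩
    rintro b (_ | ⟨_, hb⟩)
    · simp
    · rcases has b hb with hb | hb <;> simp [hb]

theorem interlace_zipWith {as : List α} {xss : List (List α)} {mss : List (List (List α))}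
    (hxss : xss.length = as.length + 1)
    (hmss : Forall₂ (fun xs ms => ms.length = xs.length + 1) xss mss) :
    interlace as (zipWith interlace xss mss) = interlace (interlace as xss) mss.flatten := by
  induction as generalizing xss mss with
  | nil =>
    obtain ⟨xs, rfl⟩ := length_eq_one_iff.1 hxss
    rcases hmss with _ | ⟨_, hmss⟩
    cases hmss
    simp [interlace]
  | cons a as ih =>
    obtain ⟨xs, xss, rfl⟩ := exists_cons_of_length_eq_add_one hxss
    rcases hmss with _ | ⟨hms, hmss⟩
    simp only [zipWith_cons_cons, interlace, headD_cons, tail_cons, flatten_cons,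
      ih (by simpa using hxss) hmss, interlace_append_cons_append hms]

end List

namespace BT

variable {l r s t t' tx s' : BT} {v x : ℝ} {d k θ : ℕ}

/-! ### Binary search trees -/

theorem mem_nodes_node : x ∈ nodes (node l v r) ↔ x = v ∨ x ∈ nodes l ∨ x ∈ nodes r := by
  simp [nodes]

theorem sig_node_self : sig (node l v r) v = [] := by simp [sig]

theorem sig_node_of_lt (h : x < v) : sig (node l v r) x = false :: sig l x := by simp [sig, h]

theorem sig_node_of_gt (h : v < x) : sig (node l v r) x = true :: sig r x := by
  simp [sig, h, h.not_gt]

theorem isBST.mem_left_of_lt (ht : isBST (node l v r)) (hx : x ∈ nodes (node l v r))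
    (h : x < v) : x ∈ nodes l := by
  rcases mem_nodes_node.1 hx with rfl | hx | hx
  · exact absurd h (lt_irrefl x)
  · exact hx
  · exact absurd (ht.2.1 x hx) h.not_gt

theorem isBST.mem_right_of_gt (ht : isBST (node l v r)) (hx : x ∈ nodes (node l v r))
    (h : v < x) : x ∈ nodes r := by
  rcases mem_nodes_node.1 hx with rfl | hx | hx
  · exact absurd h (lt_irrefl x)
  · exact absurd (ht.1 x hx) h.not_gt
  · exact hx

theorem size_pos_of_mem (h : x ∈ nodes t) : 0 < size t := by
  cases t with
  | leaf => simp [nodes] at h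
  | node l v r => simp [size]

theorem mem_inorder : x ∈ inorder t ↔ x ∈ nodes t := by
  induction t with
  | leaf => simp [inorder, nodes]
  | node l v r ihl ihr => simp [inorder, nodes, ihl, ihr]; tauto

theorem length_inorder (t : BT) : (inorder t).length = size t := by
  induction t with
  | leaf => rfl
  | node l v r ihl ihr => simp [inorder, size, ihl, ihr]; omega

theorem isBST_iff_pairwise_inorder : isBST t ↔ (inorder t).Pairwise (· < ·) := by
  induction t with
  | leaf => simp [isBST, inorder]
  | node l v r ihl ihr =>
    simp only [isBST, inorder, List.pairwise_append, List.pairwise_cons, List.mem_cons,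
      ← ihl, ← ihr, mem_inorder]
    constructor
    · rintro ⟨hl, hr, bl, br⟩
      exact ⟨bl, ⟨hr, br⟩, fun a ha b hb =>
        hb.elim (· ▸ hl a ha) fun hb => (hl a ha).trans (hr b hb)⟩
    · rintro ⟨bl, ⟨hr, br⟩, h⟩
      exact ⟨fun a ha => h a ha v (.inl rfl), hr, bl, br⟩

theorem toFinset_inorder (t : BT) : (inorder t).toFinset = nodes t := by
  ext x; simp [mem_inorder]

theorem size_eq_card_nodes (ht : isBST t) : size t = (nodes t).card := by
  rw [← length_inorder, ← toFinset_inorder,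
    List.toFinset_card_of_nodup ((isBST_iff_pairwise_inorder.1 ht).imp ne_of_lt)]

theorem nodes_ins (t : BT) (x : ℝ) : nodes (ins t x) = insert x (nodes t) := by
  induction t with
  | leaf => simp [ins, nodes]
  | node l v r ihl ihr =>
    rcases lt_trichotomy x v with h | rfl | h
    · simp only [ins, if_pos h, nodes, ihl]; grind
    · simp [ins, nodes]
    · simp only [ins, if_neg h.not_gt, if_pos h, nodes, ihr]; grind

theorem isBST_ins (x : ℝ) (ht : isBST t) : isBST (ins t x) := by
  induction t with
  | leaf => simp [ins, isBST, nodes]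
  | node l v r ihl ihr =>
    obtain ⟨hl, hr, bl, br⟩ := ht
    rcases lt_trichotomy x v with h | rfl | h
    · simp only [ins, if_pos h]
      exact ⟨by simpa [nodes_ins, h] using hl, hr, ihl bl, br⟩
    · simpa [ins] using ⟨hl, hr, bl, br⟩
    · simp only [ins, if_neg h.not_gt, if_pos h]
      exact ⟨hl, by simpa [nodes_ins, h] using hr, bl, ihr br⟩

theorem nodes_foldl_ins (L : List ℝ) (t : BT) :
    nodes (L.foldl ins t) = nodes t ∪ L.toFinset := by
  induction L generalizing t with
  | nil => simp
  | cons a L ih => rw [List.foldl_cons, ih, nodes_ins, List.toFinset_cons]; ext; simp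

theorem isBST_foldl_ins (L : List ℝ) (ht : isBST t) : isBST (L.foldl ins t) := by
  induction L generalizing t with
  | nil => exact ht
  | cons a L ih => exact ih (isBST_ins a ht)

/-! ### Slots -/

theorem slots_leaf (d : ℕ) : slots d leaf = [leaf] := by cases d <;> rfl

theorem mem_slots_succ_node : s ∈ slots (d + 1) (node l v r) ↔ s ∈ slots d l ∨ s ∈ slots d r := by
  simp [slots]

theorem isBST_of_mem_slots (ht : isBST t) (hs : s ∈ slots d t) : isBST s := by
  induction d generalizing t with
  | zero => simp_all [slots]
  | succ d ih =>
    cases t with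
    | leaf => simp_all [slots_leaf]
    | node l v r => exact (mem_slots_succ_node.1 hs).elim (ih ht.2.2.1) (ih ht.2.2.2)

theorem size_le_of_mem_slots (hs : s ∈ slots d t) : size s ≤ size t := by
  induction d generalizing t with
  | zero => simp_all [slots]
  | succ d ih =>
    cases t with
    | leaf => simp_all [slots_leaf]
    | node l v r =>
      rcases mem_slots_succ_node.1 hs with hs | hs <;> grind [size]

theorem nodes_subset_of_mem_slots (hs : s ∈ slots d t) : nodes s ⊆ nodes t := by
  induction d generalizing t with
  | zero => simp_all [slots]
  | succ d ih =>
    cases t with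
    | leaf => simp_all [slots_leaf]
    | node l v r =>
      intro x hx
      rcases mem_slots_succ_node.1 hs with hs | hs <;> simp [mem_nodes_node, ih hs hx]

theorem mem_nodes_of_mem_slots_of_lt_of_lt (ht : isBST t) (hs : s ∈ slots d t) {u w : ℝ}
    (hu : u ∈ nodes s) (hw : w ∈ nodes s) (hx : x ∈ nodes t) (hux : u < x) (hxw : x < w) :
    x ∈ nodes s := by
  induction d generalizing t with
  | zero => simp_all [slots]
  | succ d ih =>
    cases t with
    | leaf => simp_all [slots_leaf, nodes]
    | node l v r =>
      rcases mem_slots_succ_node.1 hs with hs | hs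
      · have hwv : w < v := ht.1 w (nodes_subset_of_mem_slots hs hw)
        exact ih ht.2.2.1 hs (ht.mem_left_of_lt hx (hxw.trans hwv))
      · have huv : v < u := ht.2.1 u (nodes_subset_of_mem_slots hs hu)
        exact ih ht.2.2.2 hs (ht.mem_right_of_gt hx (huv.trans hux))

theorem le_length_sig_of_mem_slots (ht : isBST t) (hs : s ∈ slots d t) (hx : x ∈ nodes s) :
    d ≤ (sig t x).length := by
  induction d generalizing t with
  | zero => simp
  | succ d ih =>
    cases t with
    | leaf => simp_all [slots_leaf, nodes]
    | node l v r =>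
      rcases mem_slots_succ_node.1 hs with hs | hs
      · rw [sig_node_of_lt (ht.1 x (nodes_subset_of_mem_slots hs hx))]
        simpa using ih ht.2.2.1 hs
      · rw [sig_node_of_gt (ht.2.1 x (nodes_subset_of_mem_slots hs hx))]
        simpa using ih ht.2.2.2 hs

theorem exists_mem_slots_of_lt_length_sig (ht : isBST t) (hx : x ∈ nodes t)
    (hd : d < (sig t x).length) : ∃ s ∈ slots d t, x ∈ nodes s ∧ sig s x ≠ [] := by
  induction d generalizing t with
  | zero => exact ⟨t, by simp [slots], hx, List.ne_nil_of_length_pos hd⟩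
  | succ d ih =>
    cases t with
    | leaf => simp [nodes] at hx
    | node l v r =>
      rcases lt_trichotomy x v with h | rfl | h
      · rw [sig_node_of_lt h] at hd
        obtain ⟨s, hs, hxs⟩ := ih ht.2.2.1 (ht.mem_left_of_lt hx h) (by simpa using hd)
        exact ⟨s, mem_slots_succ_node.2 (.inl hs), hxs⟩
      · simp [sig_node_self] at hd
      · rw [sig_node_of_gt h] at hd
        obtain ⟨s, hs, hxs⟩ := ih ht.2.2.2 (ht.mem_right_of_gt hx h) (by simpa using hd)
        exact ⟨s, mem_slots_succ_node.2 (.inr hs), hxs⟩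

theorem eq_leaf_of_mem_slots_of_height_lt (ht : isBST t) (hd : height t < d)
    (hs : s ∈ slots d t) : s = leaf := by
  cases s with
  | leaf => rfl
  | node l v r =>
    have hv : v ∈ nodes (node l v r) := mem_nodes_node.2 (.inl rfl)
    have := Finset.le_sup (f := fun x => (sig t x).length) (nodes_subset_of_mem_slots hs hv)
    have := le_length_sig_of_mem_slots ht hs hv
    rw [height] at hd
    omega

theorem exists_two_le_size_of_lt_height (ht : isBST t) (hd : d < height t) :
    ∃ s ∈ slots d t, 2 ≤ size s := by
  obtain ⟨x, hx, hdx⟩ := Finset.lt_sup_iff.1 hd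
  obtain ⟨s, hs, hxs, hsig⟩ := exists_mem_slots_of_lt_length_sig ht hx hdx
  refine ⟨s, hs, ?_⟩
  cases s with
  | leaf => simp [nodes] at hxs
  | node l v r =>
    rcases mem_nodes_node.1 hxs with rfl | hx | hx
    · exact absurd sig_node_self hsig
    · have := size_pos_of_mem hx; simp [size]; omega
    · have := size_pos_of_mem hx; simp [size]; omega

/-! ### Slot sizes under insertion and deletion -/

def maxSlotSize : ℕ → BT → ℕ
  | 0, t => size t
  | _ + 1, leaf => 0
  | d + 1, node l _ r => max (maxSlotSize d l) (maxSlotSize d r)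

theorem maxSlotSize_le_iff {c : ℕ} : maxSlotSize d t ≤ c ↔ ∀ s ∈ slots d t, size s ≤ c := by
  induction d generalizing t with
  | zero => simp [maxSlotSize, slots]
  | succ d ih =>
    cases t with
    | leaf => simp [maxSlotSize, slots_leaf, size]
    | node l v r => simp only [maxSlotSize, max_le_iff, ih, mem_slots_succ_node]; grind

theorem size_le_maxSlotSize (hs : s ∈ slots d t) : size s ≤ maxSlotSize d t :=
  maxSlotSize_le_iff.1 le_rfl s hs

theorem maxSlotSize_leaf (d : ℕ) : maxSlotSize d leaf = 0 := by cases d <;> rfl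

theorem maxSlotSize_succ_le (d : ℕ) (t : BT) : maxSlotSize (d + 1) t ≤ maxSlotSize d t := by
  induction d generalizing t with
  | zero => cases t <;> simp [maxSlotSize, size]; omega
  | succ d ih =>
    cases t with
    | leaf => simp [maxSlotSize]
    | node l v r => exact max_le_max (ih l) (ih r)

theorem maxSlotSize_left_le (d : ℕ) (l : BT) (v : ℝ) (r : BT) :
    maxSlotSize d l ≤ maxSlotSize d (node l v r) := by
  cases d with
  | zero => simp [maxSlotSize, size]; omega
  | succ d => exact (maxSlotSize_succ_le d l).trans (le_max_left _ _)

theorem maxSlotSize_right_le (d : ℕ) (l : BT) (v : ℝ) (r : BT) :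
    maxSlotSize d r ≤ maxSlotSize d (node l v r) := by
  cases d with
  | zero => simp [maxSlotSize, size]; omega
  | succ d => exact (maxSlotSize_succ_le d r).trans (le_max_right _ _)

theorem maxSlotSize_node_le_node {l' r' : BT} (hl : ∀ d, maxSlotSize d l' ≤ maxSlotSize d l)
    (hr : ∀ d, maxSlotSize d r' ≤ maxSlotSize d r) (v' v : ℝ) (d : ℕ) :
    maxSlotSize d (node l' v' r') ≤ maxSlotSize d (node l v r) := by
  cases d with
  | zero => have := hl 0; have := hr 0; simp_all [maxSlotSize, size]; omega
  | succ d => exact max_le_max (hl d) (hr d)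

theorem maxSlotSize_le_of_extractMax_eq_some {m : ℝ} {t' : BT} (h : extractMax t = some (m, t'))
    (d : ℕ) : maxSlotSize d t' ≤ maxSlotSize d t := by
  induction t using extractMax.induct generalizing m t' d with
  | case1 => simp [extractMax] at h
  | case2 l v hl =>
    simp only [extractMax, hl, Option.some.injEq, Prod.mk.injEq] at h
    simp [← h.2, maxSlotSize_leaf]
  | case3 l v m₀ l' hl ih =>
    simp only [extractMax, hl, Option.some.injEq, Prod.mk.injEq] at h
    obtain ⟨-, rfl⟩ := h
    exact maxSlotSize_node_le_node (ih hl) (fun _ => le_rfl) _ _ d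
  | case4 l v rl rv rr hr =>
    simp only [extractMax, hr, Option.some.injEq, Prod.mk.injEq] at h
    obtain ⟨-, rfl⟩ := h
    exact maxSlotSize_left_le d _ _ _
  | case5 l v rl rv rr m₀ r' hr ih =>
    simp only [extractMax, hr, Option.some.injEq, Prod.mk.injEq] at h
    obtain ⟨-, rfl⟩ := h
    exact maxSlotSize_node_le_node (fun _ => le_rfl) (ih hr) _ _ d

theorem maxSlotSize_le_of_extractMin_eq_some {m : ℝ} {t' : BT} (h : extractMin t = some (m, t'))
    (d : ℕ) : maxSlotSize d t' ≤ maxSlotSize d t := by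
  induction t using extractMin.induct generalizing m t' d with
  | case1 => simp [extractMin] at h
  | case2 v r hr =>
    simp only [extractMin, hr, Option.some.injEq, Prod.mk.injEq] at h
    simp [← h.2, maxSlotSize_leaf]
  | case3 v r m₀ r' hr ih =>
    simp only [extractMin, hr, Option.some.injEq, Prod.mk.injEq] at h
    obtain ⟨-, rfl⟩ := h
    exact maxSlotSize_node_le_node (fun _ => le_rfl) (ih hr) _ _ d
  | case4 ll lv lr v r hl =>
    simp only [extractMin, hl, Option.some.injEq, Prod.mk.injEq] at h
    obtain ⟨-, rfl⟩ := h
    exact maxSlotSize_right_le d _ _ _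
  | case5 ll lv lr v r m₀ l' hl ih =>
    simp only [extractMin, hl, Option.some.injEq, Prod.mk.injEq] at h
    obtain ⟨-, rfl⟩ := h
    exact maxSlotSize_node_le_node (ih hl) (fun _ => le_rfl) _ _ d

theorem maxSlotSize_delete_le (t : BT) (x : ℝ) (d : ℕ) :
    maxSlotSize d (delete t x) ≤ maxSlotSize d t := by
  induction t, x using delete.induct generalizing d with
  | case1 => rfl
  | case2 l v r x h ih =>
    rw [delete, if_pos h]
    exact maxSlotSize_node_le_node ih (fun _ => le_rfl) _ _ d
  | case3 l v r x h h' ih =>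
    rw [delete, if_neg h, if_pos h']
    exact maxSlotSize_node_le_node (fun _ => le_rfl) ih _ _ d
  | case4 l v r x h h' m l' hl =>
    rw [delete, if_neg h, if_neg h', hl]
    exact maxSlotSize_node_le_node (maxSlotSize_le_of_extractMax_eq_some hl) (fun _ => le_rfl) _ _ d
  | case5 l v r x h h' hl m r' hr =>
    rw [delete, if_neg h, if_neg h', hl, hr]
    refine maxSlotSize_node_le_node (fun d => ?_) (maxSlotSize_le_of_extractMin_eq_some hr) _ _ d
    simp [maxSlotSize_leaf]
  | case6 l v r x h h' hl hr =>
    rw [delete, if_neg h, if_neg h', hl, hr, maxSlotSize_leaf]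
    exact Nat.zero_le _

theorem maxSlotSize_foldl_delete_le (L : List ℝ) (t : BT) (d : ℕ) :
    maxSlotSize d (L.foldl delete t) ≤ maxSlotSize d t := by
  induction L generalizing t with
  | nil => rfl
  | cons a L ih => exact (ih (delete t a)).trans (maxSlotSize_delete_le t a d)

theorem exists_mem_slots_of_mem_slots_ins (hs : s ∈ slots d (ins t x)) :
    ∃ s₀ ∈ slots d t, nodes s ⊆ insert x (nodes s₀) := by
  induction d generalizing t with
  | zero => simp_all [slots, nodes_ins]
  | succ d ih =>
    cases t with
    | leaf =>
      have : s = leaf := by simpa [ins, slots, slots_leaf] using hs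
      exact ⟨leaf, by simp [slots_leaf], by simp [this, nodes]⟩
    | node l v r =>
      rcases lt_trichotomy x v with h | rfl | h
      · rw [ins, if_pos h, mem_slots_succ_node] at hs
        rcases hs with hs | hs
        · obtain ⟨s₀, hs₀, hsub⟩ := ih hs
          exact ⟨s₀, mem_slots_succ_node.2 (.inl hs₀), hsub⟩
        · exact ⟨s, mem_slots_succ_node.2 (.inr hs), Finset.subset_insert _ _⟩
      · simp only [ins, lt_irrefl, if_false] at hs
        exact ⟨s, hs, Finset.subset_insert _ _⟩
      · rw [ins, if_neg h.not_gt, if_pos h, mem_slots_succ_node] at hs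
        rcases hs with hs | hs
        · exact ⟨s, mem_slots_succ_node.2 (.inl hs), Finset.subset_insert _ _⟩
        · obtain ⟨s₀, hs₀, hsub⟩ := ih hs
          exact ⟨s₀, mem_slots_succ_node.2 (.inr hs₀), hsub⟩

theorem exists_mem_slots_of_mem_slots_foldl_ins (L : List ℝ) (hs : s ∈ slots d (L.foldl ins t)) :
    ∃ s₀ ∈ slots d t, nodes s ⊆ nodes s₀ ∪ L.toFinset := by
  induction L generalizing t with
  | nil => exact ⟨s, hs, Finset.subset_union_left⟩
  | cons a L ih =>
    obtain ⟨s₁, hs₁, hsub₁⟩ := ih hs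
    obtain ⟨s₀, hs₀, hsub₀⟩ := exists_mem_slots_of_mem_slots_ins hs₁
    refine ⟨s₀, hs₀, hsub₁.trans ?_⟩
    intro y hy
    have := @hsub₀ y
    simp only [Finset.mem_union, Finset.mem_insert, List.toFinset_cons] at hy this ⊢
    tauto

theorem maxSlotSize_foldl_ins_le {L : List ℝ} (ht : isBST t) (hL : ∀ x ∈ L, x ∉ nodes t)
    (hsep : ∀ u ∈ L, ∀ w ∈ L, u < w → ∃ x ∈ nodes t, u < x ∧ x < w) (d : ℕ) :
    maxSlotSize d (L.foldl ins t) ≤ 2 * maxSlotSize d t + 1 := by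
  refine maxSlotSize_le_iff.2 fun s hs => ?_
  have ht' := isBST_foldl_ins L ht
  obtain ⟨s₀, hs₀, hsub⟩ := exists_mem_slots_of_mem_slots_foldl_ins L hs
  have hold : (nodes s).filter (· ∈ nodes t) ⊆ nodes s₀ := fun y hy => by
    simp only [Finset.mem_filter] at hy
    rcases Finset.mem_union.1 (hsub hy.1) with h | h
    · exact h
    · exact absurd hy.2 (hL y (List.mem_toFinset.1 h))
  have hnew :
      ((nodes s).filter (· ∉ nodes t)).card ≤ ((nodes s).filter (· ∈ nodes t)).card + 1 := by
    refine Finset.card_le_card_add_one_of_separated _ _ fun u hu w hw huw => ?_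
    simp only [Finset.mem_filter] at hu hw
    have hmemL : ∀ y ∈ nodes s, y ∉ nodes t → y ∈ L := fun y hy hyt =>
      (Finset.mem_union.1 (hsub hy)).elim
        (fun h => absurd (nodes_subset_of_mem_slots hs₀ h) hyt) List.mem_toFinset.1
    obtain ⟨x, hx, hux, hxw⟩ := hsep u (hmemL u hu.1 hu.2) w (hmemL w hw.1 hw.2) huw
    have hxt' : x ∈ nodes (L.foldl ins t) := by
      rw [nodes_foldl_ins]; exact Finset.mem_union_left _ hx
    exact ⟨x, Finset.mem_filter.2
      ⟨mem_nodes_of_mem_slots_of_lt_of_lt ht' hs hu.1 hw.1 hxt' hux hxw, hx⟩, hux, hxw⟩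
  have hs₀ : (nodes s₀).card ≤ maxSlotSize d t := by
    rw [← size_eq_card_nodes (isBST_of_mem_slots ht hs₀)]
    exact size_le_maxSlotSize hs₀
  rw [size_eq_card_nodes (isBST_of_mem_slots ht' hs), ← Finset.card_filter_add_card_filter_not
    (p := (· ∈ nodes t))]
  have := Finset.card_le_card hold
  omega

/-! ### Balancing -/

theorem inorder_split (ht : isBST t) (x : ℝ) :
    inorder (split t x).1 = (inorder t).filter (· < x) ∧
      inorder (split t x).2 = (inorder t).filter (x < ·) := by
  induction t with
  | leaf => simp [split, inorder]
  | node l v r ihl ihr =>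
    obtain ⟨hl, hr, bl, br⟩ := ht
    have hl' : ∀ z ∈ inorder l, z < v := fun z hz => hl z (mem_inorder.1 hz)
    have hr' : ∀ z ∈ inorder r, v < z := fun z hz => hr z (mem_inorder.1 hz)
    have nil_of {L : List ℝ} {p : ℝ → Prop} [DecidablePred p] (h : ∀ z ∈ L, ¬ p z) :
        L.filter (p ·) = [] := List.filter_eq_nil_iff.2 (by simpa using h)
    have self_of {L : List ℝ} {p : ℝ → Prop} [DecidablePred p] (h : ∀ z ∈ L, p z) :
        L.filter (p ·) = L := List.filter_eq_self.2 (by simpa using h)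
    rcases lt_trichotomy x v with h | rfl | h
    · simp [split, h, h.not_gt, inorder, (ihl bl).1, (ihl bl).2,
        nil_of fun z hz => (h.trans (hr' z hz)).not_gt, self_of fun z hz => h.trans (hr' z hz)]
    · simp [split, inorder, self_of hl', self_of hr',
        nil_of fun z hz => (hl' z hz).not_gt, nil_of fun z hz => (hr' z hz).not_gt]
    · simp [split, h, h.not_gt, inorder, (ihr br).1, (ihr br).2,
        nil_of fun z hz => ((hl' z hz).trans h).not_gt, self_of fun z hz => (hl' z hz).trans h]

theorem length_multiSplit (t : BT) (xs : List ℝ) : (multiSplit t xs).length = xs.length + 1 := by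
  induction t, xs using multiSplit.induct with
  | case1 t => simp [multiSplit]
  | case2 t x₀ xs' ih₁ ih₂ =>
    rw [multiSplit, List.length_append, ih₁, ih₂, List.length_take, List.length_drop]
    simp only [List.length_cons]
    omega

theorem inorder_eq_interlace_multiSplit (ht : isBST t) {xs : List ℝ}
    (hxs : xs.Pairwise (· < ·)) (hmem : ∀ x ∈ xs, x ∈ nodes t) :
    inorder t = xs.interlace ((multiSplit t xs).map inorder) := by
  induction t, xs using multiSplit.induct with
  | case1 t => simp [multiSplit, List.interlace]
  | case2 t x₀ xs' ih₁ ih₂ =>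
    rw [multiSplit]
    have hlen : 1 ≤ ((x₀ :: xs').length + 1) / 2 ∧
        ((x₀ :: xs').length + 1) / 2 - 1 < (x₀ :: xs').length := by simp; omega
    generalize ((x₀ :: xs').length + 1) / 2 = j at ih₁ ih₂ hlen ⊢
    obtain ⟨i, rfl⟩ : ∃ i, j = i + 1 := ⟨j - 1, by omega⟩
    simp only [Nat.add_sub_cancel] at ih₁ ih₂ hlen ⊢
    generalize x₀ :: xs' = xs at *
    obtain ⟨-, hi⟩ := hlen
    rw [List.getD_eq_getElem _ _ hi] at *
    have hdecomp : xs.take i ++ xs[i] :: xs.drop (i + 1) = xs := by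
      rw [← List.drop_eq_getElem_cons hi, List.take_append_drop]
    rw [← hdecomp, List.pairwise_append, List.pairwise_cons] at hxs
    obtain ⟨hsplit₁, hsplit₂⟩ := inorder_split ht xs[i]
    have hsorted := isBST_iff_pairwise_inorder.1 ht
    rw [List.map_append, List.interlace_eq_take_append_drop hi (by simp [length_multiSplit, hi.le]),
      ← ih₁ (isBST_iff_pairwise_inorder.2 (hsplit₁ ▸ hsorted.sublist List.filter_sublist)) hxs.1
        fun x hx => by
          rw [← mem_inorder, hsplit₁, List.mem_filter, mem_inorder]
          exact ⟨hmem x (List.mem_of_mem_take hx),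
            by simpa using hxs.2.2 x hx _ List.mem_cons_self⟩,
      ← ih₂ (isBST_iff_pairwise_inorder.2 (hsplit₂ ▸ hsorted.sublist List.filter_sublist)) hxs.2.1.2
        fun x hx => by
          rw [← mem_inorder, hsplit₂, List.mem_filter, mem_inorder]
          exact ⟨hmem x (List.mem_of_mem_drop hx), by simpa using hxs.2.1.1 x hx⟩,
      hsplit₁, hsplit₂]
    exact hsorted.eq_filter_lt_append_cons_filter_gt (mem_inorder.2 (hmem _ (List.getElem_mem hi)))

def shallowInorder : ℕ → BT → List ℝ
  | 0, _ => []
  | _ + 1, leaf => []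
  | k + 1, node l v r => shallowInorder k l ++ v :: shallowInorder k r

theorem length_slots (k : ℕ) (t : BT) : (slots k t).length = (shallowInorder k t).length + 1 := by
  induction k generalizing t with
  | zero => rfl
  | succ k ih =>
    cases t with
    | leaf => rfl
    | node l v r => simp [slots, shallowInorder, ih]; omega

theorem inorder_eq_interlace_slots (k : ℕ) (t : BT) :
    inorder t = (shallowInorder k t).interlace ((slots k t).map inorder) := by
  induction k generalizing t with
  | zero => simp [slots, shallowInorder, List.interlace]
  | succ k ih =>
    cases t with
    | leaf => simp [slots, shallowInorder, List.interlace, inorder]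
    | node l v r =>
      rw [slots, shallowInorder, inorder, List.map_append,
        List.interlace_append_cons_append (by simp [length_slots]), ← ih, ← ih]

theorem length_shallowInorder_le (k : ℕ) (t : BT) : (shallowInorder k t).length ≤ 2 ^ k - 1 := by
  induction k generalizing t with
  | zero => simp [shallowInorder]
  | succ k ih =>
    cases t with
    | leaf => simp [shallowInorder]
    | node l v r =>
      have := ih l; have := ih r; have := Nat.one_le_two_pow (n := k)
      simp only [shallowInorder, List.length_append, List.length_cons, pow_succ]
      omega

theorem mem_shallowInorder (ht : isBST t) :
    x ∈ shallowInorder k t ↔ x ∈ shallowNodes t k := by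
  induction k generalizing t with
  | zero => simp [shallowInorder, shallowNodes]
  | succ k ih =>
    cases t with
    | leaf => simp [shallowInorder, shallowNodes, nodes]
    | node l v r =>
      simp only [shallowInorder, List.mem_append, List.mem_cons, ih ht.2.2.1, ih ht.2.2.2,
        shallowNodes, Finset.mem_filter, mem_nodes_node]
      rcases lt_trichotomy x v with h | rfl | h
      · have : x ∉ nodes r := fun hx => (ht.2.1 x hx).not_gt h
        simp [sig_node_of_lt h, h.ne, this]
      · simp [sig_node_self]
      · have : x ∉ nodes l := fun hx => (ht.1 x hx).not_gt h
        simp [sig_node_of_gt h, h.ne', this]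

theorem card_shallowNodes_le (ht : isBST t) (k : ℕ) : (shallowNodes t k).card ≤ 2 ^ k - 1 := by
  calc (shallowNodes t k).card = (shallowInorder k t).toFinset.card := by
        congr 1; ext x; simp [mem_shallowInorder ht]
    _ ≤ (shallowInorder k t).length := List.toFinset_card_le _
    _ ≤ 2 ^ k - 1 := length_shallowInorder_le k t

theorem glue_snd (t : BT) (ts : List BT) : (glue t ts).2 = ts.drop (size t + 1) := by
  induction t generalizing ts with
  | leaf => simp [glue, size, List.drop_one]
  | node l v r ihl ihr => simp only [glue, ihl, ihr, List.drop_drop, size]; congr 1; omega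

theorem inorder_glue (t : BT) (ts : List BT) :
    inorder (glue t ts).1 = (inorder t).interlace (ts.map inorder) := by
  induction t generalizing ts with
  | leaf => cases ts <;> rfl
  | node l v r ihl ihr =>
    rw [glue, inorder, ihl, ihr, glue_snd, inorder, List.interlace_append_cons, length_inorder,
      List.map_drop]

theorem size_le_of_mem_slots_glue {ts : List BT} {c : ℕ} (ht : ∀ s ∈ slots d t, s = leaf)
    (hts : ∀ P ∈ ts, size P ≤ c) (hs : s ∈ slots d (glue t ts).1) : size s ≤ c := by
  induction t generalizing d ts with
  | leaf =>
    refine (size_le_of_mem_slots hs).trans ?_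
    cases ts with
    | nil => simp [glue, size]
    | cons P ts => exact hts P List.mem_cons_self
  | node l v r ihl ihr =>
    cases d with
    | zero => simp [slots] at ht
    | succ d =>
      rcases mem_slots_succ_node.1 hs with hs | hs
      · exact ihl (fun s hs => ht s (mem_slots_succ_node.2 (.inl hs))) hts hs
      · refine ihr (fun s hs => ht s (mem_slots_succ_node.2 (.inr hs))) (fun P hP => hts P ?_) hs
        rw [glue_snd] at hP
        exact List.mem_of_mem_drop hP

theorem IsPerfBalBST.eq_leaf_of_mem_slots {S : Finset ℝ} (h : IsPerfBalBST S t)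
    (hS : S.card < 2 ^ (d + 1)) (hs : s ∈ slots (d + 1) t) : s = leaf := by
  obtain ⟨ht, rfl, hheight⟩ := h
  refine eq_leaf_of_mem_slots_of_height_lt ht ?_ hs
  rw [hheight]
  exact Nat.log_lt_of_lt_pow' (by omega) (size_eq_card_nodes ht ▸ hS)

theorem mem_nodes_of_mem_rankElems (ht : 0 < size t) (hx : x ∈ rankElems t k) : x ∈ nodes t := by
  obtain ⟨j, hj, rfl⟩ := List.mem_map.1 hx
  have hidx : (j + 1) * size t / 2 ^ k < (inorder t).length := by
    rw [length_inorder, Nat.div_lt_iff_lt_mul (by positivity)]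
    exact Nat.mul_lt_mul_of_lt_of_le (by simp at hj; omega) le_rfl ht |>.trans_eq (mul_comm _ _)
  rw [List.getD_eq_getElem _ _ hidx, ← mem_inorder]
  exact List.getElem_mem hidx

/-- The in-order list of `Z ∪ X`, the values of the perfectly balanced top tree that
`Balance(·, k)` builds above the trees `balParts t k`. -/
noncomputable def balKeys (t : BT) (k : ℕ) : List ℝ :=
  (shallowInorder k t).interlace ((slots k t).map fun ti => (inorder ti).filter (· ∈ rankElems t k))

theorem length_balParts (t : BT) (k : ℕ) : (balParts t k).length = (balKeys t k).length + 1 := by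
  rw [balParts, List.length_flatMap, balKeys, List.length_interlace (by simp [length_slots])]
  simp only [length_multiSplit, List.sum_map_add, List.map_map, Function.comp_def]
  simp [length_slots]
  omega

theorem inorder_eq_interlace_balParts (ht : isBST t) (k : ℕ) :
    inorder t = (balKeys t k).interlace ((balParts t k).map inorder) := by
  have hslots : ∀ ti ∈ slots k t, inorder ti = ((inorder ti).filter (· ∈ rankElems t k)).interlace
      ((multiSplit ti ((inorder ti).filter (· ∈ rankElems t k))).map inorder) := fun ti hti =>
    inorder_eq_interlace_multiSplit (isBST_of_mem_slots ht hti)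
      ((isBST_iff_pairwise_inorder.1 (isBST_of_mem_slots ht hti)).sublist List.filter_sublist)
      fun x hx => mem_inorder.1 (List.mem_of_mem_filter hx)
  have hflat : (balParts t k).map inorder = ((slots k t).map fun ti =>
      (multiSplit ti ((inorder ti).filter (· ∈ rankElems t k))).map inorder).flatten := by
    simp [balParts, List.flatMap_def, Function.comp_def]
  calc inorder t = (shallowInorder k t).interlace ((slots k t).map inorder) :=
        inorder_eq_interlace_slots k t
    _ = (shallowInorder k t).interlace (List.zipWith List.interlace
          ((slots k t).map fun ti => (inorder ti).filter (· ∈ rankElems t k))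
          ((slots k t).map fun ti =>
            (multiSplit ti ((inorder ti).filter (· ∈ rankElems t k))).map inorder)) := by
        rw [List.zipWith_map, List.zipWith_self, List.map_congr_left hslots]
    _ = _ := by
        rw [List.interlace_zipWith (by simp [length_slots]), balKeys, hflat]
        simp [List.forall₂_map_left_iff, List.forall₂_map_right_iff, List.forall₂_same,
          length_multiSplit]

theorem mem_balKeys (ht : isBST t) :
    x ∈ balKeys t k ↔ x ∈ nodes t ∧ (x ∈ shallowNodes t k ∨ x ∈ rankElems t k) := by
  have hZ : x ∈ shallowNodes t k → x ∈ nodes t := fun hx => (Finset.mem_filter.1 hx).1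
  rw [balKeys, List.mem_interlace (by simp [length_slots]), mem_shallowInorder ht]
  simp only [List.mem_map, exists_exists_and_eq_and, List.mem_filter, decide_eq_true_eq]
  constructor
  · rintro (hx | ⟨ti, hti, hx, hxX⟩)
    · exact ⟨hZ hx, .inl hx⟩
    · exact ⟨nodes_subset_of_mem_slots hti (mem_inorder.1 hx), .inr hxX⟩
  · rintro ⟨hxt, hx | hxX⟩
    · exact .inl hx
    rw [← mem_inorder, inorder_eq_interlace_slots k t, List.mem_interlace (by simp [length_slots]),
      mem_shallowInorder ht] at hxt
    simp only [List.mem_map, exists_exists_and_eq_and] at hxt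
    rcases hxt with hx | ⟨ti, hti, hx⟩
    · exact .inl hx
    · exact .inr ⟨ti, hti, hx, hxX⟩

theorem balKeys_eq_inorder {t₀ : BT} (ht : isBST t) (hsize : 0 < size t)
    (ht₀ : IsPerfBalBST (shallowNodes t k ∪ (rankElems t k).toFinset) t₀) :
    balKeys t k = inorder t₀ := by
  refine List.Pairwise.eq_of_mem_iff ?_ (isBST_iff_pairwise_inorder.1 ht₀.1) fun x => ?_
  · refine (isBST_iff_pairwise_inorder.1 ht).sublist ?_
    conv_rhs => rw [inorder_eq_interlace_balParts ht k]
    exact List.sublist_interlace _ _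
  · rw [mem_balKeys ht, mem_inorder, ht₀.2.1, Finset.mem_union, List.mem_toFinset]
    constructor
    · exact fun h => h.2
    · rintro (hx | hx)
      · exact ⟨(Finset.mem_filter.1 hx).1, .inl hx⟩
      · exact ⟨mem_nodes_of_mem_rankElems hsize hx, .inr hx⟩

theorem size_le_of_mem_balParts (ht : isBST t) {P : BT} (hP : P ∈ balParts t k) :
    size P ≤ size t / 2 ^ k := by
  obtain ⟨l₁, l₂, heq, hkeys⟩ := List.exists_eq_append_of_mem_interlace (length_balParts t k ▸
    List.length_map _) (List.mem_map_of_mem (f := inorder) hP)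
  rw [← inorder_eq_interlace_balParts ht] at heq
  have hnodup : (l₁ ++ inorder P ++ l₂).Nodup :=
    heq ▸ (isBST_iff_pairwise_inorder.1 ht).imp ne_of_lt
  -- `inorder P` is a block of `inorder t` between two keys, so it contains no rank element.
  rw [← length_inorder P, ← length_inorder t, heq]
  refine List.length_le_div_of_getD_mul_div_notMem (by positivity) 0 fun j hj hmem => ?_
  rw [← heq] at hmem
  set e := (inorder t).getD ((j + 1) * (inorder t).length / 2 ^ k) 0
  have hX : e ∈ rankElems t k := List.mem_map.2 ⟨j, List.mem_range.2 hj, by rw [← length_inorder]⟩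
  have hnode : e ∈ nodes t := by
    rw [← mem_inorder, heq]
    exact List.mem_append_left _ (List.mem_append_right _ hmem)
  rcases hkeys _ ((mem_balKeys ht).2 ⟨hnode, .inr hX⟩) with h | h
  · rw [List.append_assoc, List.nodup_append] at hnodup
    exact hnodup.2.2 _ h _ (List.mem_append_left _ hmem) rfl
  · rw [List.nodup_append] at hnodup
    exact hnodup.2.2 _ (List.mem_append_right _ hmem) _ h rfl

theorem IsBalanceResult.inorder_eq (ht : isBST tx) (h : IsBalanceResult k tx s') :
    inorder s' = inorder tx := by
  unfold IsBalanceResult at h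
  split_ifs at h with hsize
  · refine List.Pairwise.eq_of_mem_iff (isBST_iff_pairwise_inorder.1 h.1)
      (isBST_iff_pairwise_inorder.1 ht) fun x => ?_
    rw [mem_inorder, mem_inorder, h.2.1]
  · obtain ⟨t₀, ht₀, rfl⟩ := h
    rw [inorder_glue, ← balKeys_eq_inorder ht (Nat.one_le_two_pow.trans (not_lt.1 hsize)) ht₀,
      ← inorder_eq_interlace_balParts ht]

theorem IsBalanceResult.maxSlotSize_le (ht : isBST tx) (h : IsBalanceResult k tx s') :
    maxSlotSize (k + 1) s' ≤ size tx / 2 ^ k := by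
  refine maxSlotSize_le_iff.2 fun s hs => ?_
  unfold IsBalanceResult at h
  split_ifs at h with hsize
  · rw [h.eq_leaf_of_mem_slots ?_ hs]
    · exact Nat.zero_le _
    · rw [← size_eq_card_nodes ht, pow_succ]
      omega
  · -- The top tree has at most `2 ^ (k + 1) - 2` nodes, so it ends above depth `k + 1`.
    obtain ⟨t₀, ht₀, rfl⟩ := h
    refine size_le_of_mem_slots_glue (fun s hs => ht₀.eq_leaf_of_mem_slots ?_ hs)
      (fun P hP => size_le_of_mem_balParts ht hP) hs
    have hZ := card_shallowNodes_le ht k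
    have hX : (rankElems tx k).toFinset.card ≤ 2 ^ k - 1 :=
      (List.toFinset_card_le _).trans (by simp [rankElems])
    have := Finset.card_union_le (shallowNodes tx k) (rankElems tx k).toFinset
    have := Nat.one_le_two_pow (n := k)
    rw [pow_succ]
    omega

theorem BulkBalanceRel.inorder_eq (ht : isBST t) (h : BulkBalanceRel k θ t t') :
    inorder t' = inorder t := by
  induction θ generalizing t t' with
  | zero =>
    rcases h with ⟨rfl, rfl⟩ | h
    · rfl
    · exact h.inorder_eq ht
  | succ θ ih =>
    cases t with
    | leaf => simp only [BulkBalanceRel] at h; rw [h]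
    | node l v r =>
      obtain ⟨l', r', hl, hr, rfl⟩ := h
      rw [inorder, inorder, ih ht.2.2.1 hl, ih ht.2.2.2 hr]

theorem BulkBalanceRel.maxSlotSize_le (ht : isBST t) (h : BulkBalanceRel k θ t t') :
    maxSlotSize (θ + (k + 1)) t' ≤ maxSlotSize θ t / 2 ^ k := by
  induction θ generalizing t t' with
  | zero =>
    rcases h with ⟨rfl, rfl⟩ | h
    · simp [maxSlotSize_leaf]
    · simpa [maxSlotSize] using h.maxSlotSize_le ht
  | succ θ ih =>
    cases t with
    | leaf => simp only [BulkBalanceRel] at h; simp [h, maxSlotSize_leaf]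
    | node l v r =>
      obtain ⟨l', r', hl, hr, rfl⟩ := h
      rw [Nat.add_right_comm, maxSlotSize, maxSlotSize]
      exact max_le ((ih ht.2.2.1 hl).trans (Nat.div_le_div_right (le_max_left _ _)))
        ((ih ht.2.2.2 hr).trans (Nat.div_le_div_right (le_max_right _ _)))

end BT

/-! ### Bulk tree sequences -/

theorem Chunks.exists_mem_between {X Y : Finset ℝ} (h : Chunks 1 X Y) {u w : ℝ} (hu : u ∈ Y)
    (hw : w ∈ Y) (huX : u ∉ X) (hwX : w ∉ X) (huw : u < w) : ∃ x ∈ X, u < x ∧ x < w := by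
  obtain ⟨x, hx, ⟨s₁, hs₁, h₁⟩, s₂, hs₂, h₂⟩ :=
    h {u, w} (by simp [Finset.insert_subset_iff, hu, hw]) (Finset.card_pair huw.ne)
  have hxu : x ≠ u := fun h => huX (h ▸ hx)
  have hxw : x ≠ w := fun h => hwX (h ▸ hx)
  simp only [Finset.mem_insert, Finset.mem_singleton] at hs₁ hs₂
  refine ⟨x, hx, ?_, ?_⟩ <;> rcases hs₁ with rfl | rfl <;> rcases hs₂ with rfl | rfl <;> grind

namespace OnePhaseSeq

variable {k q : ℕ} {T : ℕ → BT}

theorem maxSlotSize_succ_le (hseq : OnePhaseSeq k q T) {y : ℕ} (hy : y < q) :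
    BT.maxSlotSize ((y + 1) * (k + 1)) (T (y + 1)) ≤
      2 * (BT.maxSlotSize (y * (k + 1)) (T y) / 2 ^ k) + 1 := by
  obtain ⟨hbst, -, hchunk, hstep⟩ := hseq
  obtain ⟨-, t₁, t₂, hbal, ⟨lI, -, hlI, rfl⟩, ⟨lD, -, -, hT⟩⟩ := hstep y hy
  have ht := hbst y hy.le
  have hin := hbal.inorder_eq ht
  have ht₁ : t₁.isBST :=
    BT.isBST_iff_pairwise_inorder.2 (hin ▸ BT.isBST_iff_pairwise_inorder.1 ht)
  have hnodes : t₁.nodes = (T y).nodes := by rw [← BT.toFinset_inorder, hin, BT.toFinset_inorder]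
  have hnew : ∀ x ∈ lI, x ∈ (T (y + 1)).nodes ∧ x ∉ (T y).nodes := fun x hx =>
    Finset.mem_sdiff.1 (hlI ▸ List.mem_toFinset.2 hx)
  have hins := BT.maxSlotSize_foldl_ins_le ht₁ (L := lI) (fun x hx => hnodes ▸ (hnew x hx).2)
    (fun u hu w hw huw => hnodes ▸ (hchunk y hy).1.exists_mem_between (hnew u hu).1 (hnew w hw).1
      (hnew u hu).2 (hnew w hw).2 huw) ((y + 1) * (k + 1))
  have hdel := hT ▸ BT.maxSlotSize_foldl_delete_le lD (lI.foldl BT.ins t₁) ((y + 1) * (k + 1))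
  have hbal' := hbal.maxSlotSize_le ht
  rw [← Nat.succ_mul, Nat.succ_eq_add_one] at hbal'
  omega

theorem two_pow_le_size (hk : 1 ≤ k) (hseq : OnePhaseSeq k q T) (hq : 0 < q) :
    2 ^ ((k - 1) * (q - 1) + 1) ≤ (T 0).size := by
  have hlast : 2 ≤ BT.maxSlotSize ((q - 1) * (k + 1)) (T (q - 1)) := by
    obtain ⟨s, hs, hsize⟩ := BT.exists_two_le_size_of_lt_height (hseq.1 (q - 1) (by omega))
      (hseq.2.2.2 (q - 1) (by omega)).1
    exact hsize.trans (BT.size_le_maxSlotSize hs)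
  simpa [BT.maxSlotSize] using Nat.two_pow_le_of_le_two_mul_div_add_one
    (m := fun y => BT.maxSlotSize (y * (k + 1)) (T y)) hk
    (fun y hy => hseq.maxSlotSize_succ_le (by omega)) hlast

end OnePhaseSeq

theorem natCast_le_ceil_logb_div_of_two_pow_le {k q n : ℕ} (hk : 3 ≤ k) (hq : 0 < q)
    (hn : 2 ^ ((k - 1) * (q - 1) + 1) ≤ n) : (q : ℤ) ≤ ⌈Real.logb 2 n / ((k : ℝ) - 2)⌉ := by
  have hk' : (3 : ℝ) ≤ k := by exact_mod_cast hk
  have hq' : (1 : ℝ) ≤ q := by exact_mod_cast hq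
  have hlog : (((k - 1) * (q - 1) + 1 : ℕ) : ℝ) ≤ Real.logb 2 n := by
    rw [Real.le_logb_iff_rpow_le one_lt_two (by exact_mod_cast Nat.one_le_two_pow.trans hn),
      Real.rpow_natCast]
    exact_mod_cast hn
  push_cast [Nat.cast_sub (by omega : 1 ≤ k), Nat.cast_sub hq] at hlog
  rw [← Int.sub_one_lt_iff, Int.lt_ceil, lt_div_iff₀ (by linarith)]
  push_cast
  nlinarith

/-- length of one-phase bulk tree sequences: a one-phase `k`-bulk
tree sequence `T_0, …, T_q` with `k ≥ 5` satisfies `q ≤ ⌈log₂ |T_0| / (k − 2)⌉`. -/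
theorem one_phase_length (k q : ℕ) (hk : 5 ≤ k) (T : ℕ → BT)
    (hseq : OnePhaseSeq k q T) :
    (q : ℤ) ≤ ⌈Real.logb 2 ((T 0).size) / ((k : ℝ) - 2)⌉ := by
  rcases Nat.eq_zero_or_pos q with rfl | hq
  · have hlog : 0 ≤ Real.logb 2 (T 0).size := by
      simpa using (Nat.cast_nonneg _).trans (Real.natLog_le_logb (T 0).size 2)
    have hk' : (0 : ℝ) ≤ k - 2 := by
      have : (5 : ℝ) ≤ k := by exact_mod_cast hk
      linarith
    simpa using Int.ceil_nonneg (div_nonneg hlog hk')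
  exact natCast_le_ceil_logb_div_of_two_pow_le (by omega) hq (hseq.two_pow_le_size (by omega) hq)
end

section
/- For every integer t ≥ 1 and every t-tree H on m ≥ 1 vertices, there exists an assignment v ↦ [a_v, b_v] of closed real intervals to the vertices of H, with all 2m endpoints pairwise distinct, such that: (1) [a_v, b_v] ∩ [a_w, b_w] ≠ ∅ for every edge vw of H; and (2) for every point p ∈ ℝ, the number of vertices v of H with p ∈ [a_v, b_v] is at most (t+1)·⌊log₃(2m+1) + 1⌋. -/
attribute [local instance] Classical.propDecidable

/-- `H` is a `t`-tree: there is an ordering of the vertices (an equivalence with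
`Fin (card V)`) such that, for every vertex `v`, the neighbours of `v` coming earlier
in the ordering form a clique of size at most `t` in `H`. -/
def IsTTree (t : ℕ) {V : Type*} [Fintype V] (H : SimpleGraph V) : Prop :=
  ∃ e : V ≃ Fin (Fintype.card V),
    ∀ v : V, H.IsClique {w | H.Adj v w ∧ e w < e v} ∧
      {w | H.Adj v w ∧ e w < e v}.ncard ≤ t

namespace TTreeProof

variable {par : ℕ → ℕ}

/-- `i` descends to `v` by iterating `par`, staying inside `s`. -/
def Desc (par : ℕ → ℕ) (s : Finset ℕ) (v i : ℕ) : Prop :=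
  ∃ n, par^[n] i = v ∧ ∀ j ≤ n, par^[j] i ∈ s

lemma Desc.mem {s : Finset ℕ} {v i : ℕ} (h : Desc par s v i) : i ∈ s := by
  obtain ⟨n, -, hj⟩ := h; simpa using hj 0 (Nat.zero_le n)

lemma Desc.root_mem {s : Finset ℕ} {v i : ℕ} (h : Desc par s v i) : v ∈ s := by
  obtain ⟨n, hn, hj⟩ := h
  have := hj n le_rfl
  rwa [hn] at this

lemma desc_refl {s : Finset ℕ} {v : ℕ} (h : v ∈ s) : Desc par s v v := by
  refine ⟨0, rfl, ?_⟩
  intro j hj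
  obtain rfl := Nat.le_zero.mp hj
  simpa using h

lemma desc_step {s : Finset ℕ} {v i : ℕ} (hi : i ∈ s) (h : Desc par s v (par i)) :
    Desc par s v i := by
  obtain ⟨n, hn, hj⟩ := h
  refine ⟨n + 1, ?_, ?_⟩
  · rw [Function.iterate_succ_apply]; exact hn
  · intro j hj'
    cases j with
    | zero => simpa using hi
    | succ j =>
      rw [Function.iterate_succ_apply]
      exact hj j (by omega)

lemma desc_trans {s : Finset ℕ} {v w i : ℕ} (h1 : Desc par s w i) (h2 : Desc par s v w) :
    Desc par s v i := by
  obtain ⟨n, hn, hjn⟩ := h1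
  obtain ⟨m, hm, hjm⟩ := h2
  refine ⟨m + n, ?_, ?_⟩
  · rw [Function.iterate_add_apply, hn]; exact hm
  · intro j hj
    rcases le_or_gt j n with h | h
    · exact hjn j h
    · have hjnm : j - n ≤ m := by omega
      have e : par^[j] i = par^[j - n] w := by
        conv_lhs => rw [show j = (j - n) + n by omega]
        rw [Function.iterate_add_apply, hn]
      rw [e]; exact hjm _ hjnm

lemma desc_tail {s : Finset ℕ} {v i : ℕ} (h : Desc par s v i) (hne : i ≠ v) :
    Desc par s v (par i) := by
  obtain ⟨n, hn, hj⟩ := h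
  cases n with
  | zero => exact absurd hn hne
  | succ n =>
    refine ⟨n, ?_, ?_⟩
    · rw [Function.iterate_succ_apply] at hn; exact hn
    · intro j hj'
      have := hj (j + 1) (by omega)
      rwa [Function.iterate_succ_apply] at this

lemma desc_mono {s s' : Finset ℕ} (hss : s ⊆ s') {v i : ℕ} (h : Desc par s v i) :
    Desc par s' v i := by
  obtain ⟨n, hn, hj⟩ := h
  exact ⟨n, hn, fun j hj' => hss (hj j hj')⟩

lemma iter_le (hpar : ∀ i, par i ≤ i) : ∀ (n : ℕ) (i : ℕ), par^[n] i ≤ i := by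
  intro n
  induction n with
  | zero => simp
  | succ n ih =>
    intro i
    rw [Function.iterate_succ_apply]
    exact le_trans (ih (par i)) (hpar i)

lemma Desc.root_le (hpar : ∀ i, par i ≤ i) {s : Finset ℕ} {v i : ℕ}
    (h : Desc par s v i) : v ≤ i := by
  obtain ⟨n, hn, -⟩ := h
  rw [← hn]; exact iter_le hpar n i

/-- The subtree of `v` inside `s`. -/
noncomputable def sub (par : ℕ → ℕ) (s : Finset ℕ) (v : ℕ) : Finset ℕ :=
  s.filter (fun i => Desc par s v i)

lemma mem_sub {s : Finset ℕ} {v i : ℕ} : i ∈ sub par s v ↔ Desc par s v i := by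
  constructor
  · intro h; exact (Finset.mem_filter.mp h).2
  · intro h; exact Finset.mem_filter.mpr ⟨h.mem, h⟩

lemma sub_subset {s : Finset ℕ} {v : ℕ} : sub par s v ⊆ s := Finset.filter_subset _ _

lemma desc_sub_self {s : Finset ℕ} {v i : ℕ} (h : Desc par s v i) :
    Desc par (sub par s v) v i := by
  obtain ⟨n, hn, hj⟩ := h
  refine ⟨n, hn, fun j hjn => ?_⟩
  rw [mem_sub]
  refine ⟨n - j, ?_, fun j' hj' => ?_⟩
  · rw [← Function.iterate_add_apply, show n - j + j = n by omega]; exact hn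
  · rw [← Function.iterate_add_apply]
    exact hj _ (by omega)

/-- Rootedness: everything in `s` descends to `r` within `s`. -/
def Rooted (par : ℕ → ℕ) (s : Finset ℕ) (r : ℕ) : Prop :=
  r ∈ s ∧ ∀ i ∈ s, Desc par s r i

lemma sub_eq_self_of_rooted {s : Finset ℕ} {r : ℕ} (h : Rooted par s r) :
    sub par s r = s := by
  apply Finset.Subset.antisymm sub_subset
  intro i hi
  exact mem_sub.mpr (h.2 i hi)

lemma rooted_sub {s : Finset ℕ} {y : ℕ} (hy : y ∈ s) : Rooted par (sub par s y) y :=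
  ⟨mem_sub.mpr (desc_refl hy), fun i hi => desc_sub_self (mem_sub.mp hi)⟩

/-- Children of `v` in `s`. -/
noncomputable def kids (par : ℕ → ℕ) (s : Finset ℕ) (v : ℕ) : Finset ℕ :=
  s.filter (fun c => par c = v ∧ c ≠ v)

lemma mem_kids {s : Finset ℕ} {v c : ℕ} :
    c ∈ kids par s v ↔ c ∈ s ∧ par c = v ∧ c ≠ v := by
  simp [kids]

lemma v_lt_kid (hpar : ∀ i, par i ≤ i) {s : Finset ℕ} {v c : ℕ}
    (hc : c ∈ kids par s v) : v < c := by
  obtain ⟨hcs, hpc, hne⟩ := mem_kids.mp hc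
  have := hpar c
  omega

lemma desc_of_kid {s : Finset ℕ} {v c : ℕ} (hv : v ∈ s) (hc : c ∈ kids par s v) :
    Desc par s v c := by
  obtain ⟨hcs, hpc, -⟩ := mem_kids.mp hc
  exact desc_step hcs (by rw [hpc]; exact desc_refl hv)

lemma not_root_mem_sub_kid (hpar : ∀ i, par i ≤ i) {s : Finset ℕ} {v c : ℕ}
    (hc : c ∈ kids par s v) : v ∉ sub par s c := by
  intro h
  have h1 := (mem_sub.mp h).root_le hpar
  have h2 := v_lt_kid hpar hc
  omega

lemma kid_sub_subset (hpar : ∀ i, par i ≤ i) {s : Finset ℕ} {v c : ℕ} (hv : v ∈ s)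
    (hc : c ∈ kids par s v) : sub par s c ⊆ sub par s v := by
  intro i hi
  exact mem_sub.mpr (desc_trans (mem_sub.mp hi) (desc_of_kid hv hc))

lemma kid_sub_subset_erase (hpar : ∀ i, par i ≤ i) {s : Finset ℕ} {v c : ℕ} (hv : v ∈ s)
    (hc : c ∈ kids par s v) : sub par s c ⊆ (sub par s v).erase v := by
  intro i hi
  refine Finset.mem_erase.mpr ⟨?_, kid_sub_subset hpar hv hc hi⟩
  rintro rfl
  exact not_root_mem_sub_kid hpar hc hi

lemma aux_same_kid (hpar : ∀ i, par i ≤ i) {s : Finset ℕ} {v c c' : ℕ}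
    (hc : c ∈ kids par s v) (hc' : c' ∈ kids par s v)
    {i a b : ℕ} (ha : par^[a] i = c) (hb : par^[b] i = c') (hab : a ≤ b) : c = c' := by
  by_contra hne
  have he : par^[b - a] c = c' := by
    rw [← ha, ← Function.iterate_add_apply, show b - a + a = b by omega]; exact hb
  rcases Nat.eq_zero_or_pos (b - a) with h0 | hpos
  · rw [h0] at he; exact hne he
  · obtain ⟨u, hu⟩ : ∃ u, b - a = u + 1 := ⟨b - a - 1, by omega⟩
    rw [hu, Function.iterate_succ_apply, (mem_kids.mp hc).2.1] at he
    have h1 : c' ≤ v := by rw [← he]; exact iter_le hpar u v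
    have h2 := v_lt_kid hpar hc'
    omega

lemma kids_sub_disjoint (hpar : ∀ i, par i ≤ i) {s : Finset ℕ} {v c c' : ℕ}
    (hc : c ∈ kids par s v) (hc' : c' ∈ kids par s v) (hne : c ≠ c') :
    Disjoint (sub par s c) (sub par s c') := by
  rw [Finset.disjoint_left]
  intro i hi hi'
  obtain ⟨a, ha, -⟩ := mem_sub.mp hi
  obtain ⟨b, hb, -⟩ := mem_sub.mp hi'
  rcases le_total a b with hab | hab
  · exact hne (aux_same_kid hpar hc hc' ha hb hab)
  · exact hne (aux_same_kid hpar hc' hc hb ha hab).symm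

lemma exists_kid_aux {s : Finset ℕ} {v : ℕ} :
    ∀ (n : ℕ) (i : ℕ), par^[n] i = v → (∀ j ≤ n, par^[j] i ∈ s) → i ≠ v →
      ∃ c ∈ kids par s v, Desc par s c i := by
  intro n
  induction n with
  | zero => intro i h _ hne; exact absurd h hne
  | succ n ih =>
    intro i hn hj hne
    by_cases hw : par^[n] i = v
    · exact ih i hw (fun j hj' => hj j (by omega)) hne
    · refine ⟨par^[n] i, ?_, ⟨n, rfl, fun j hj' => hj j (by omega)⟩⟩
      rw [mem_kids]
      refine ⟨hj n (by omega), ?_, hw⟩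
      rw [Function.iterate_succ_apply'] at hn; exact hn

lemma exists_kid_of_mem_sub {s : Finset ℕ} {v i : ℕ} (hi : i ∈ sub par s v) (hne : i ≠ v) :
    ∃ c ∈ kids par s v, i ∈ sub par s c := by
  obtain ⟨n, hn, hj⟩ := mem_sub.mp hi
  obtain ⟨c, hc, hd⟩ := exists_kid_aux n i hn hj hne
  exact ⟨c, hc, mem_sub.mpr hd⟩

lemma desc_sdiff {s : Finset ℕ} {d x i : ℕ}
    (h : Desc par s x i) (hi : i ∉ sub par s d) : Desc par (s \ sub par s d) x i := by
  obtain ⟨n, hn, hj⟩ := h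
  refine ⟨n, hn, fun j hjn => ?_⟩
  rw [Finset.mem_sdiff]
  refine ⟨hj j hjn, fun hmem => hi ?_⟩
  have hpre : Desc par s (par^[j] i) i := ⟨j, rfl, fun j' hj' => hj j' (by omega)⟩
  exact mem_sub.mpr (desc_trans hpre (mem_sub.mp hmem))

lemma sub_sdiff {s : Finset ℕ} {d x : ℕ} :
    sub par (s \ sub par s d) x = sub par s x \ sub par s d := by
  ext i
  simp only [Finset.mem_sdiff, mem_sub]
  constructor
  · intro h
    have h1 : Desc par s x i := desc_mono Finset.sdiff_subset h
    have h2 : i ∉ sub par s d := (Finset.mem_sdiff.mp h.mem).2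
    exact ⟨h1, fun hh => h2 (mem_sub.mpr hh)⟩
  · rintro ⟨h1, h2⟩
    exact desc_sdiff h1 (fun hh => h2 (mem_sub.mp hh))

lemma rooted_sdiff {s : Finset ℕ} {r d : ℕ} (h : Rooted par s r) (hr : r ∉ sub par s d) :
    Rooted par (s \ sub par s d) r := by
  refine ⟨Finset.mem_sdiff.mpr ⟨h.1, hr⟩, fun i hi => ?_⟩
  obtain ⟨hi1, hi2⟩ := Finset.mem_sdiff.mp hi
  exact desc_sdiff (h.2 i hi1) hi2

lemma kids_sdiff (hpar : ∀ i, par i ≤ i) {s : Finset ℕ} {v d : ℕ} (hd : d ∈ kids par s v) :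
    kids par (s \ sub par s d) v = kids par s v \ {d} := by
  ext c
  simp only [mem_kids, Finset.mem_sdiff, Finset.mem_singleton]
  constructor
  · rintro ⟨⟨hcs, hcnd⟩, hpc, hne⟩
    refine ⟨⟨hcs, hpc, hne⟩, ?_⟩
    rintro rfl
    exact hcnd (mem_sub.mpr (desc_refl hcs))
  · rintro ⟨⟨hcs, hpc, hne⟩, hcd⟩
    refine ⟨⟨hcs, fun hmem => ?_⟩, hpc, hne⟩
    have hc : c ∈ kids par s v := mem_kids.mpr ⟨hcs, hpc, hne⟩
    have := kids_sub_disjoint hpar hc hd hcd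
    exact (Finset.disjoint_left.mp this (mem_sub.mpr (desc_refl hcs))) hmem

lemma kids_in_sub {s : Finset ℕ} {y : ℕ} (hy : y ∈ s) :
    kids par (sub par s y) y = kids par s y := by
  ext c
  simp only [mem_kids]
  constructor
  · rintro ⟨hc, h2, h3⟩; exact ⟨sub_subset hc, h2, h3⟩
  · rintro ⟨hc, h2, h3⟩
    exact ⟨mem_sub.mpr (desc_of_kid hy (mem_kids.mpr ⟨hc, h2, h3⟩)), h2, h3⟩

lemma sub_in_sub (hpar : ∀ i, par i ≤ i) {s : Finset ℕ} {y c : ℕ} (hy : y ∈ s)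
    (hc : c ∈ kids par s y) : sub par (sub par s y) c = sub par s c := by
  apply Finset.Subset.antisymm
  · intro i hi
    exact mem_sub.mpr (desc_mono sub_subset (mem_sub.mp hi))
  · intro i hi
    have h1 : Desc par (sub par s c) c i := desc_sub_self (mem_sub.mp hi)
    exact mem_sub.mpr (desc_mono (kid_sub_subset hpar hy hc) h1)



variable {par : ℕ → ℕ}

/-- Convex combination point inside `(α, β)`. -/
noncomputable def cc (α β q : ℝ) : ℝ := α + q * (β - α)

lemma cc_lt_cc {α β : ℝ} (h : α < β) {q q' : ℝ} (hq : q < q') : cc α β q < cc α β q' := by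
  unfold cc; nlinarith

lemma cc_zero (α β : ℝ) : cc α β 0 = α := by simp [cc]

lemma cc_one (α β : ℝ) : cc α β 1 = β := by simp [cc]

lemma lt_cc {α β : ℝ} (h : α < β) {q : ℝ} (hq : 0 < q) : α < cc α β q := by
  have := cc_lt_cc h hq; rwa [cc_zero] at this

lemma cc_lt {α β : ℝ} (h : α < β) {q : ℝ} (hq : q < 1) : cc α β q < β := by
  have := cc_lt_cc h hq; rwa [cc_one] at this

/-- An interval layout of the forest `s` in the region `(α,β)` with depth at most `k`. -/
structure Lay (par : ℕ → ℕ) (s : Finset ℕ) (k : ℕ) (α β : ℝ) (g : ℕ → ℝ × ℝ) : Prop where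
  lo : ∀ i ∈ s, α < (g i).1
  hi : ∀ i ∈ s, (g i).2 < β
  proper : ∀ i ∈ s, (g i).1 < (g i).2
  edge : ∀ i ∈ s, par i ∈ s → par i ≠ i → (g i).1 < (g (par i)).2 ∧ (g (par i)).1 < (g i).2
  depth : ∀ p : ℝ, (s.filter (fun i => (g i).1 ≤ p ∧ p ≤ (g i).2)).card ≤ k

lemma Lay.mono_k {s : Finset ℕ} {k k' : ℕ} {α β : ℝ} {g : ℕ → ℝ × ℝ}
    (h : Lay par s k α β g) (hk : k ≤ k') : Lay par s k' α β g :=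
  ⟨h.lo, h.hi, h.proper, h.edge, fun p => le_trans (h.depth p) hk⟩

lemma Lay.congr {s : Finset ℕ} {k : ℕ} {α β : ℝ} {g g' : ℕ → ℝ × ℝ}
    (h : Lay par s k α β g) (hg : ∀ i ∈ s, g' i = g i) : Lay par s k α β g' := by
  refine ⟨?_, ?_, ?_, ?_, ?_⟩
  · intro i hi; rw [hg i hi]; exact h.lo i hi
  · intro i hi; rw [hg i hi]; exact h.hi i hi
  · intro i hi; rw [hg i hi]; exact h.proper i hi
  · intro i hi hpi hne; rw [hg i hi, hg (par i) hpi]; exact h.edge i hi hpi hne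
  · intro p
    have : s.filter (fun i => (g' i).1 ≤ p ∧ p ≤ (g' i).2)
        = s.filter (fun i => (g i).1 ≤ p ∧ p ≤ (g i).2) := by
      apply Finset.filter_congr
      intro i hi; rw [hg i hi]
    rw [this]; exact h.depth p

lemma Lay.single {v : ℕ} {k : ℕ} {α β : ℝ} (hαβ : α < β) (hk : 1 ≤ k) :
    Lay par {v} k α β (fun _ => (cc α β (1/3), cc α β (2/3))) := by
  refine ⟨?_, ?_, ?_, ?_, ?_⟩
  · intro i _; exact lt_cc hαβ (by norm_num)
  · intro i _; exact cc_lt hαβ (by norm_num)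
  · intro i _; exact cc_lt_cc hαβ (by norm_num)
  · intro i hi hpi hne
    exact absurd ((Finset.mem_singleton.mp hpi).trans (Finset.mem_singleton.mp hi).symm) hne
  · intro p
    calc (Finset.filter _ {v}).card ≤ ({v} : Finset ℕ).card := Finset.card_filter_le _ _
    _ = 1 := Finset.card_singleton v
    _ ≤ k := hk

lemma Lay.reflect {s : Finset ℕ} {k : ℕ} {α β : ℝ} {g : ℕ → ℝ × ℝ}
    (h : Lay par s k α β g) :
    Lay par s k α β (fun i => (α + β - (g i).2, α + β - (g i).1)) := by
  refine ⟨?_, ?_, ?_, ?_, ?_⟩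
  · intro i hi; have := h.hi i hi; simpa using by linarith
  · intro i hi; have := h.lo i hi; simpa using by linarith
  · intro i hi; have := h.proper i hi; simpa using by linarith
  · intro i hi hpi hne
    obtain ⟨h1, h2⟩ := h.edge i hi hpi hne
    constructor <;> simp <;> linarith
  · intro p
    have heq : s.filter (fun i => (α + β - (g i).2) ≤ p ∧ p ≤ (α + β - (g i).1))
        = s.filter (fun i => (g i).1 ≤ (α + β - p) ∧ (α + β - p) ≤ (g i).2) := by
      apply Finset.filter_congr
      intro i _
      constructor
      · rintro ⟨h1, h2⟩; constructor <;> linarith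
      · rintro ⟨h1, h2⟩; constructor <;> linarith
    show (s.filter (fun i => (α + β - (g i).2) ≤ p ∧ p ≤ (α + β - (g i).1))).card ≤ k
    rw [heq]; exact h.depth (α + β - p)



variable {par : ℕ → ℕ}

lemma filter_union_card {s₁ s₂ : Finset ℕ} (hd : Disjoint s₁ s₂) (P : ℕ → Prop)
    [DecidablePred P] :
    ((s₁ ∪ s₂).filter P).card = (s₁.filter P).card + (s₂.filter P).card := by
  rw [Finset.filter_union,
    Finset.card_union_of_disjoint (Finset.disjoint_filter_filter hd)]

lemma card_le_one_of_subset_singleton {s : Finset ℕ} {v : ℕ} (h : s ⊆ {v}) : s.card ≤ 1 :=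
  le_trans (Finset.card_le_card h) (by simp)

/-- Glue a "component" layout (left, budget `k`) onto an anchored layout (right,
budget `k+1`), extending the interval of the anchor vertex `v` leftwards over the
whole component region. -/
lemma glue {k : ℕ} (hk : 1 ≤ k)
    {s₁ s₂ : Finset ℕ} {v : ℕ} (hv : v ∈ s₂) (hdisj : Disjoint s₁ s₂)
    {α β : ℝ} (hαβ : α < β) {g₁ g₂ : ℕ → ℝ × ℝ} {γ₂ : ℝ}
    (h₁ : Lay par s₁ k (cc α β (1/8)) (cc α β (3/8)) g₁)
    (h₂ : Lay par s₂ (k+1) (cc α β (1/2)) β g₂)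
    (ha : (g₂ v).1 < γ₂) (hb : ∀ i ∈ s₂, i ≠ v → γ₂ < (g₂ i).1)
    (hc₁ : ∀ i ∈ s₁, par i ∈ s₂ → par i = v)
    (hc₂ : ∀ i ∈ s₂, par i ∈ s₁ → i = v) :
    ∃ g γ, Lay par (s₁ ∪ s₂) (k+1) α β g ∧ (g v).1 < γ ∧
      ∀ i ∈ s₁ ∪ s₂, i ≠ v → γ < (g i).1 := by
  classical
  set L : ℝ := cc α β (1/16) with hL
  set m2 : ℝ := cc α β (1/2) with hm2
  have hord1 : α < L := lt_cc hαβ (by norm_num)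
  have hord2 : L < cc α β (3/32) := cc_lt_cc hαβ (by norm_num)
  have hord3 : cc α β (3/32) < cc α β (1/8) := cc_lt_cc hαβ (by norm_num)
  have hord4 : cc α β (1/8) < cc α β (3/8) := cc_lt_cc hαβ (by norm_num)
  have hord5 : cc α β (3/8) < m2 := cc_lt_cc hαβ (by norm_num)
  have hord6 : m2 < β := cc_lt hαβ (by norm_num)
  have hv1 : v ∉ s₁ := fun h => (Finset.disjoint_left.mp hdisj h) hv
  set g : ℕ → ℝ × ℝ := fun i => if i ∈ s₁ then g₁ i else if i = v then (L, (g₂ v).2) else g₂ i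
    with hgdef
  have gv : g v = (L, (g₂ v).2) := by simp [hgdef, hv1]
  have g1 : ∀ i ∈ s₁, g i = g₁ i := by intro i hi; simp [hgdef, hi]
  have g2 : ∀ i ∈ s₂, i ≠ v → g i = g₂ i := by
    intro i hi hne
    have : i ∉ s₁ := fun h => (Finset.disjoint_left.mp hdisj h) hi
    simp [hgdef, this, hne]
  have hgv2 : m2 < (g₂ v).1 := h₂.lo v hv
  refine ⟨g, cc α β (3/32), ⟨?_, ?_, ?_, ?_, ?_⟩, ?_, ?_⟩
  -- lo
  · intro i hi
    rcases Finset.mem_union.mp hi with hi1 | hi2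
    · rw [g1 i hi1]; exact lt_trans (lt_trans hord1 (lt_trans hord2 hord3)) (h₁.lo i hi1)
    · by_cases hiv : i = v
      · rw [hiv, gv]; exact hord1
      · rw [g2 i hi2 hiv]; exact lt_trans (lt_trans hord1 (by linarith)) (h₂.lo i hi2)
  -- hi
  · intro i hi
    rcases Finset.mem_union.mp hi with hi1 | hi2
    · rw [g1 i hi1]; exact lt_trans (h₁.hi i hi1) (by linarith)
    · by_cases hiv : i = v
      · rw [hiv, gv]; exact h₂.hi v hv
      · rw [g2 i hi2 hiv]; exact h₂.hi i hi2
  -- proper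
  · intro i hi
    rcases Finset.mem_union.mp hi with hi1 | hi2
    · rw [g1 i hi1]; exact h₁.proper i hi1
    · by_cases hiv : i = v
      · rw [hiv, gv]
        have := h₂.proper v hv
        show L < (g₂ v).2
        linarith
      · rw [g2 i hi2 hiv]; exact h₂.proper i hi2
  -- edge
  · intro i hi hpi hne
    rcases Finset.mem_union.mp hi with hi1 | hi2
    · by_cases hp1 : par i ∈ s₁
      · rw [g1 i hi1, g1 _ hp1]; exact h₁.edge i hi1 hp1 hne
      · have hp2 : par i ∈ s₂ := by
          rcases Finset.mem_union.mp hpi with h | h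
          · exact absurd h hp1
          · exact h
        have hpv := hc₁ i hi1 hp2
        rw [g1 i hi1, hpv, gv]
        have hA := h₁.lo i hi1
        have hB := h₁.hi i hi1
        have hC := h₁.proper i hi1
        have hD := h₂.proper v hv
        constructor
        · show (g₁ i).1 < (g₂ v).2
          linarith
        · show L < (g₁ i).2
          linarith
    · have hi1' : i ∉ s₁ := fun h => (Finset.disjoint_left.mp hdisj h) hi2
      by_cases hp1 : par i ∈ s₁
      · have hiv := hc₂ i hi2 hp1
        rw [hiv] at hp1 ⊢
        rw [gv, g1 _ hp1]
        have hA := h₁.lo (par v) hp1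
        have hB := h₁.hi (par v) hp1
        have hC := h₁.proper (par v) hp1
        have hD := h₂.proper v hv
        constructor
        · show L < (g₁ (par v)).2
          linarith
        · show (g₁ (par v)).1 < (g₂ v).2
          linarith
      · have hp2 : par i ∈ s₂ := by
          rcases Finset.mem_union.mp hpi with h | h
          · exact absurd h hp1
          · exact h
        by_cases hiv : i = v
        · rw [hiv] at hp2 hne ⊢
          rw [gv, g2 _ hp2 hne]
          have hE := h₂.edge v hv hp2 hne
          have hF := h₂.lo (par v) hp2
          have hG := h₂.proper (par v) hp2
          have hD := h₂.proper v hv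
          constructor
          · show L < (g₂ (par v)).2
            linarith
          · show (g₂ (par v)).1 < (g₂ v).2
            linarith
        · rw [g2 i hi2 hiv]
          by_cases hpv : par i = v
          · rw [hpv, gv]
            have hE := h₂.edge i hi2 hp2 hne
            rw [hpv] at hE
            have hF := h₂.lo i hi2
            have hF2 := h₂.proper i hi2
            constructor
            · show (g₂ i).1 < (g₂ v).2
              exact hE.1
            · show L < (g₂ i).2
              linarith
          · rw [g2 _ hp2 hpv]
            exact h₂.edge i hi2 hp2 hne
  -- depth
  · intro p
    rw [filter_union_card hdisj]
    have e1 : s₁.filter (fun i => (g i).1 ≤ p ∧ p ≤ (g i).2)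
        = s₁.filter (fun i => (g₁ i).1 ≤ p ∧ p ≤ (g₁ i).2) := by
      apply Finset.filter_congr
      intro i hi; rw [g1 i hi]
    by_cases hp : p < m2
    · have hd1 : (s₁.filter (fun i => (g i).1 ≤ p ∧ p ≤ (g i).2)).card ≤ k := by
        rw [e1]; exact h₁.depth p
      have hd2 : (s₂.filter (fun i => (g i).1 ≤ p ∧ p ≤ (g i).2)).card ≤ 1 := by
        apply card_le_one_of_subset_singleton (v := v)
        intro i hi
        obtain ⟨hi2, hPi⟩ := Finset.mem_filter.mp hi
        by_contra hiv
        rw [Finset.mem_singleton] at hiv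
        rw [g2 i hi2 hiv] at hPi
        have := h₂.lo i hi2
        exact absurd hPi.1 (by linarith)
      omega
    · push_neg at hp
      have hd1 : (s₁.filter (fun i => (g i).1 ≤ p ∧ p ≤ (g i).2)).card = 0 := by
        rw [Finset.card_eq_zero, Finset.filter_eq_empty_iff]
        intro i hi hPi
        rw [g1 i hi] at hPi
        have := h₁.hi i hi
        exact absurd hPi.2 (by linarith)
      by_cases hpv : p < (g₂ v).1
      · have hd2 : (s₂.filter (fun i => (g i).1 ≤ p ∧ p ≤ (g i).2)).card ≤ 1 := by
          apply card_le_one_of_subset_singleton (v := v)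
          intro i hi
          obtain ⟨hi2, hPi⟩ := Finset.mem_filter.mp hi
          by_contra hiv
          rw [Finset.mem_singleton] at hiv
          rw [g2 i hi2 hiv] at hPi
          have := hb i hi2 hiv
          exact absurd hPi.1 (by linarith)
        omega
      · push_neg at hpv
        have e2 : s₂.filter (fun i => (g i).1 ≤ p ∧ p ≤ (g i).2)
            = s₂.filter (fun i => (g₂ i).1 ≤ p ∧ p ≤ (g₂ i).2) := by
          apply Finset.filter_congr
          intro i hi
          by_cases hiv : i = v
          · rw [hiv, gv]
            show L ≤ p ∧ p ≤ (g₂ v).2 ↔ (g₂ v).1 ≤ p ∧ p ≤ (g₂ v).2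
            constructor
            · rintro ⟨-, h2⟩; exact ⟨hpv, h2⟩
            · rintro ⟨-, h2⟩; exact ⟨by linarith, h2⟩
          · rw [g2 i hi hiv]
        have hd2 : (s₂.filter (fun i => (g i).1 ≤ p ∧ p ≤ (g i).2)).card ≤ k + 1 := by
          rw [e2]; exact h₂.depth p
        omega
  -- anchor
  · rw [gv]; exact hord2
  · intro i hi hne
    rcases Finset.mem_union.mp hi with hi1 | hi2
    · rw [g1 i hi1]; exact lt_trans hord3 (h₁.lo i hi1)
    · rw [g2 i hi2 hne]
      have := h₂.lo i hi2
      linarith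



variable {par : ℕ → ℕ}

/-- Glue the apex vertex `v` onto the layout of the subtree of its unique heavy child `y`. -/
lemma glueSpine {k : ℕ} (hk : 1 ≤ k) {s₂ : Finset ℕ} {v y : ℕ}
    (hy : y ∈ s₂) (hvs : v ∉ s₂)
    {α β : ℝ} (hαβ : α < β) {g₂ : ℕ → ℝ × ℝ} {γ₂ : ℝ}
    (h₂ : Lay par s₂ (k+1) (cc α β (1/2)) β g₂)
    (ha : (g₂ y).1 < γ₂) (hb : ∀ i ∈ s₂, i ≠ y → γ₂ < (g₂ i).1)
    (hcr : ∀ i ∈ s₂, par i ∈ s₂ ∨ (par i = v ∧ i = y))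
    (hpv : par v ∉ s₂) :
    ∃ g γ, Lay par (insert v s₂) (k+1) α β g ∧ (g v).1 < γ ∧
      ∀ i ∈ insert v s₂, i ≠ v → γ < (g i).1 := by
  classical
  set L : ℝ := cc α β (1/16) with hL
  set m2 : ℝ := cc α β (1/2) with hm2
  have hord1 : α < L := lt_cc hαβ (by norm_num)
  have hord2 : L < cc α β (3/32) := cc_lt_cc hαβ (by norm_num)
  have hord3 : cc α β (3/32) < m2 := cc_lt_cc hαβ (by norm_num)
  have hord6 : m2 < β := cc_lt hαβ (by norm_num)
  have hyl : m2 < (g₂ y).1 := h₂.lo y hy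
  have hyp : (g₂ y).1 < (g₂ y).2 := h₂.proper y hy
  set x₂ : ℝ := min γ₂ ((g₂ y).2) with hx₂
  have hyx : (g₂ y).1 < x₂ := lt_min ha hyp
  set w : ℝ := ((g₂ y).1 + x₂) / 2 with hw
  have hw1 : (g₂ y).1 < w := by rw [hw]; linarith
  have hw2 : w < x₂ := by rw [hw]; linarith
  have hwγ : w < γ₂ := lt_of_lt_of_le hw2 (min_le_left _ _)
  have hwy2 : w < (g₂ y).2 := lt_of_lt_of_le hw2 (min_le_right _ _)
  have hwβ : w < β := lt_trans hwy2 (h₂.hi y hy)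
  set g : ℕ → ℝ × ℝ := fun i => if i = v then (L, w) else g₂ i with hgdef
  have gv : g v = (L, w) := by simp [hgdef]
  have g2 : ∀ i ∈ s₂, g i = g₂ i := by
    intro i hi
    have : i ≠ v := fun h => hvs (h ▸ hi)
    simp [hgdef, this]
  have hdisj : Disjoint ({v} : Finset ℕ) s₂ := by
    simp [Finset.disjoint_left, hvs]
  have hins : insert v s₂ = {v} ∪ s₂ := Finset.insert_eq v s₂
  refine ⟨g, cc α β (3/32), ⟨?_, ?_, ?_, ?_, ?_⟩, ?_, ?_⟩
  · intro i hi
    rcases Finset.mem_insert.mp hi with rfl | hi2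
    · rw [gv]; exact hord1
    · rw [g2 i hi2]; have := h₂.lo i hi2; linarith
  · intro i hi
    rcases Finset.mem_insert.mp hi with rfl | hi2
    · rw [gv]; exact hwβ
    · rw [g2 i hi2]; exact h₂.hi i hi2
  · intro i hi
    rcases Finset.mem_insert.mp hi with rfl | hi2
    · rw [gv]; show L < w; linarith
    · rw [g2 i hi2]; exact h₂.proper i hi2
  · intro i hi hpi hne
    rcases Finset.mem_insert.mp hi with rfl | hi2
    · -- i = v: impossible
      exfalso
      rcases Finset.mem_insert.mp hpi with h | h
      · exact hne h
      · exact hpv h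
    · rcases hcr i hi2 with hp2 | ⟨hp2, hiy⟩
      · rw [g2 i hi2, g2 _ hp2]
        exact h₂.edge i hi2 hp2 hne
      · rw [g2 _ hi2, hp2, gv, hiy]
        constructor
        · show (g₂ y).1 < w; exact hw1
        · show L < (g₂ y).2
          linarith
  · intro p
    rw [hins, filter_union_card hdisj]
    have hone : (Finset.filter (fun i => (g i).1 ≤ p ∧ p ≤ (g i).2) {v}).card ≤ 1 :=
      card_le_one_of_subset_singleton (Finset.filter_subset _ _)
    by_cases hp : p < m2
    · have hd2 : (s₂.filter (fun i => (g i).1 ≤ p ∧ p ≤ (g i).2)).card = 0 := by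
        rw [Finset.card_eq_zero, Finset.filter_eq_empty_iff]
        intro i hi hPi
        rw [g2 i hi] at hPi
        have := h₂.lo i hi
        exact absurd hPi.1 (by linarith)
      omega
    · push_neg at hp
      by_cases hpw : p ≤ w
      · have hd2 : (s₂.filter (fun i => (g i).1 ≤ p ∧ p ≤ (g i).2)).card ≤ 1 := by
          apply card_le_one_of_subset_singleton (v := y)
          intro i hi
          obtain ⟨hi2, hPi⟩ := Finset.mem_filter.mp hi
          rw [Finset.mem_singleton]
          by_contra hiy
          rw [g2 i hi2] at hPi
          have := hb i hi2 hiy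
          exact absurd hPi.1 (by linarith)
        omega
      · push_neg at hpw
        have hd1 : (Finset.filter (fun i => (g i).1 ≤ p ∧ p ≤ (g i).2) {v}).card = 0 := by
          rw [Finset.card_eq_zero, Finset.filter_eq_empty_iff]
          intro i hi hPi
          rw [Finset.mem_singleton] at hi
          rw [hi, gv] at hPi
          exact absurd hPi.2 (by push_neg; exact hpw)
        have e2 : s₂.filter (fun i => (g i).1 ≤ p ∧ p ≤ (g i).2)
            = s₂.filter (fun i => (g₂ i).1 ≤ p ∧ p ≤ (g₂ i).2) := by
          apply Finset.filter_congr
          intro i hi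
          rw [g2 i hi]
        have hd2 : (s₂.filter (fun i => (g i).1 ≤ p ∧ p ≤ (g i).2)).card ≤ k + 1 := by
          rw [e2]; exact h₂.depth p
        omega
  · rw [gv]; exact hord2
  · intro i hi hne
    have hi2 : i ∈ s₂ := by
      rcases Finset.mem_insert.mp hi with h | h
      · exact absurd h hne
      · exact h
    rw [g2 i hi2]
    have := h₂.lo i hi2
    linarith

/-- Glue a right-anchored (reflected) heavy-branch layout on the left with a
left-anchored apex layout on the right (for the two-heavy-children case). -/
lemma glue2 {k : ℕ} (hk : 1 ≤ k) {s₁ s₂ : Finset ℕ} {v c₁ : ℕ}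
    (hv : v ∈ s₂) (hc1 : c₁ ∈ s₁) (hdisj : Disjoint s₁ s₂)
    {α β : ℝ} (hαβ : α < β) {g₁ g₂ : ℕ → ℝ × ℝ} {γ₁ γ₂ : ℝ}
    (h₁ : Lay par s₁ (k+1) α (cc α β (1/2)) g₁)
    (ra : γ₁ < (g₁ c₁).2) (rb : ∀ i ∈ s₁, i ≠ c₁ → (g₁ i).2 < γ₁)
    (h₂ : Lay par s₂ (k+1) (cc α β (1/2)) β g₂)
    (ha : (g₂ v).1 < γ₂) (hb : ∀ i ∈ s₂, i ≠ v → γ₂ < (g₂ i).1)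
    (hx₁ : ∀ i ∈ s₁, par i ∈ s₂ → (i = c₁ ∧ par i = v))
    (hx₂ : ∀ i ∈ s₂, par i ∉ s₁) :
    ∃ g, Lay par (s₁ ∪ s₂) (k+1) α β g := by
  classical
  set m2 : ℝ := cc α β (1/2) with hm2
  have hord0 : α < m2 := lt_cc hαβ (by norm_num)
  have hord6 : m2 < β := cc_lt hαβ (by norm_num)
  set γ₁' : ℝ := max γ₁ ((g₁ c₁).1) with hγ₁'
  have hγa : γ₁' < (g₁ c₁).2 := max_lt ra (h₁.proper c₁ hc1)
  set p₁ : ℝ := (γ₁' + (g₁ c₁).2) / 2 with hp₁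
  have hp₁a : γ₁' < p₁ := by rw [hp₁]; linarith
  have hp₁b : p₁ < (g₁ c₁).2 := by rw [hp₁]; linarith
  have hp₁α : α < p₁ := lt_trans (h₁.lo c₁ hc1) (lt_of_le_of_lt (le_max_right _ _) hp₁a)
  have hp₁m : p₁ < m2 := lt_trans hp₁b (h₁.hi c₁ hc1)
  have hv1 : v ∉ s₁ := fun h => (Finset.disjoint_left.mp hdisj h) hv
  have hgv2 : m2 < (g₂ v).1 := h₂.lo v hv
  set g : ℕ → ℝ × ℝ := fun i => if i ∈ s₁ then g₁ i else if i = v then (p₁, (g₂ v).2) else g₂ i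
    with hgdef
  have gv : g v = (p₁, (g₂ v).2) := by simp [hgdef, hv1]
  have g1 : ∀ i ∈ s₁, g i = g₁ i := by intro i hi; simp [hgdef, hi]
  have g2 : ∀ i ∈ s₂, i ≠ v → g i = g₂ i := by
    intro i hi hne
    have : i ∉ s₁ := fun h => (Finset.disjoint_left.mp hdisj h) hi
    simp [hgdef, this, hne]
  refine ⟨g, ?_, ?_, ?_, ?_, ?_⟩
  · intro i hi
    rcases Finset.mem_union.mp hi with hi1 | hi2
    · rw [g1 i hi1]; exact h₁.lo i hi1
    · by_cases hiv : i = v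
      · rw [hiv, gv]; exact hp₁α
      · rw [g2 i hi2 hiv]; have := h₂.lo i hi2; linarith
  · intro i hi
    rcases Finset.mem_union.mp hi with hi1 | hi2
    · rw [g1 i hi1]; exact lt_trans (h₁.hi i hi1) hord6
    · by_cases hiv : i = v
      · rw [hiv, gv]; exact h₂.hi v hv
      · rw [g2 i hi2 hiv]; exact h₂.hi i hi2
  · intro i hi
    rcases Finset.mem_union.mp hi with hi1 | hi2
    · rw [g1 i hi1]; exact h₁.proper i hi1
    · by_cases hiv : i = v
      · rw [hiv, gv]
        show p₁ < (g₂ v).2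
        have := h₂.proper v hv
        linarith
      · rw [g2 i hi2 hiv]; exact h₂.proper i hi2
  · intro i hi hpi hne
    rcases Finset.mem_union.mp hi with hi1 | hi2
    · by_cases hp1 : par i ∈ s₁
      · rw [g1 i hi1, g1 _ hp1]; exact h₁.edge i hi1 hp1 hne
      · have hp2 : par i ∈ s₂ := by
          rcases Finset.mem_union.mp hpi with h | h
          · exact absurd h hp1
          · exact h
        obtain ⟨hic, hpv⟩ := hx₁ i hi1 hp2
        rw [g1 i hi1, hpv, gv, hic]
        have hD := h₂.proper v hv
        constructor
        · show (g₁ c₁).1 < (g₂ v).2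
          have := h₁.hi c₁ hc1
          have := h₁.proper c₁ hc1
          linarith
        · show p₁ < (g₁ c₁).2
          exact hp₁b
    · have hp2 : par i ∈ s₂ := by
        rcases Finset.mem_union.mp hpi with h | h
        · exact absurd (hx₂ i hi2) (by simp [h])
        · exact h
      by_cases hiv : i = v
      · rw [hiv] at hp2 hne ⊢
        rw [gv, g2 _ hp2 hne]
        have hE := h₂.edge v hv hp2 hne
        have hF := h₂.lo (par v) hp2
        have hG := h₂.proper (par v) hp2
        constructor
        · show p₁ < (g₂ (par v)).2
          linarith
        · show (g₂ (par v)).1 < (g₂ v).2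
          exact hE.2
      · rw [g2 i hi2 hiv]
        by_cases hpv : par i = v
        · rw [hpv, gv]
          have hE := h₂.edge i hi2 hp2 hne
          rw [hpv] at hE
          have hF := h₂.lo i hi2
          have hF2 := h₂.proper i hi2
          constructor
          · show (g₂ i).1 < (g₂ v).2
            exact hE.1
          · show p₁ < (g₂ i).2
            linarith
        · rw [g2 _ hp2 hpv]
          exact h₂.edge i hi2 hp2 hne
  · intro p
    rw [filter_union_card hdisj]
    have e1 : s₁.filter (fun i => (g i).1 ≤ p ∧ p ≤ (g i).2)
        = s₁.filter (fun i => (g₁ i).1 ≤ p ∧ p ≤ (g₁ i).2) := by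
      apply Finset.filter_congr
      intro i hi; rw [g1 i hi]
    by_cases hp : p < p₁
    · have hd1 : (s₁.filter (fun i => (g i).1 ≤ p ∧ p ≤ (g i).2)).card ≤ k + 1 := by
        rw [e1]; exact h₁.depth p
      have hd2 : (s₂.filter (fun i => (g i).1 ≤ p ∧ p ≤ (g i).2)).card = 0 := by
        rw [Finset.card_eq_zero, Finset.filter_eq_empty_iff]
        intro i hi hPi
        by_cases hiv : i = v
        · rw [hiv, gv] at hPi
          exact absurd hPi.1 (by push_neg; exact hp)
        · rw [g2 i hi hiv] at hPi
          have := h₂.lo i hi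
          exact absurd hPi.1 (by linarith)
      omega
    · push_neg at hp
      by_cases hpm : p < m2
      · -- p in the anchor sliver: only c₁ and v
        have hd1 : (s₁.filter (fun i => (g i).1 ≤ p ∧ p ≤ (g i).2)).card ≤ 1 := by
          apply card_le_one_of_subset_singleton (v := c₁)
          intro i hi
          obtain ⟨hi1, hPi⟩ := Finset.mem_filter.mp hi
          rw [Finset.mem_singleton]
          by_contra hic
          rw [g1 i hi1] at hPi
          have := rb i hi1 hic
          have hle := le_max_left γ₁ ((g₁ c₁).1)
          exact absurd hPi.2 (by linarith)
        have hd2 : (s₂.filter (fun i => (g i).1 ≤ p ∧ p ≤ (g i).2)).card ≤ 1 := by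
          apply card_le_one_of_subset_singleton (v := v)
          intro i hi
          obtain ⟨hi2, hPi⟩ := Finset.mem_filter.mp hi
          rw [Finset.mem_singleton]
          by_contra hiv
          rw [g2 i hi2 hiv] at hPi
          have := h₂.lo i hi2
          exact absurd hPi.1 (by linarith)
        omega
      · push_neg at hpm
        have hd1 : (s₁.filter (fun i => (g i).1 ≤ p ∧ p ≤ (g i).2)).card = 0 := by
          rw [Finset.card_eq_zero, Finset.filter_eq_empty_iff]
          intro i hi hPi
          rw [g1 i hi] at hPi
          have := h₁.hi i hi
          exact absurd hPi.2 (by linarith)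
        by_cases hpv : p < (g₂ v).1
        · have hd2 : (s₂.filter (fun i => (g i).1 ≤ p ∧ p ≤ (g i).2)).card ≤ 1 := by
            apply card_le_one_of_subset_singleton (v := v)
            intro i hi
            obtain ⟨hi2, hPi⟩ := Finset.mem_filter.mp hi
            rw [Finset.mem_singleton]
            by_contra hiv
            rw [g2 i hi2 hiv] at hPi
            have := hb i hi2 hiv
            exact absurd hPi.1 (by linarith)
          omega
        · push_neg at hpv
          have e2 : s₂.filter (fun i => (g i).1 ≤ p ∧ p ≤ (g i).2)
              = s₂.filter (fun i => (g₂ i).1 ≤ p ∧ p ≤ (g₂ i).2) := by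
            apply Finset.filter_congr
            intro i hi
            by_cases hiv : i = v
            · rw [hiv, gv]
              show p₁ ≤ p ∧ p ≤ (g₂ v).2 ↔ (g₂ v).1 ≤ p ∧ p ≤ (g₂ v).2
              constructor
              · rintro ⟨-, h2⟩; exact ⟨hpv, h2⟩
              · rintro ⟨-, h2⟩; exact ⟨by linarith, h2⟩
            · rw [g2 i hi hiv]
          have hd2 : (s₂.filter (fun i => (g i).1 ≤ p ∧ p ≤ (g i).2)).card ≤ k + 1 := by
            rw [e2]; exact h₂.depth p
          omega



variable {par : ℕ → ℕ}

theorem apexLemma (hpar : ∀ i, par i ≤ i) (k : ℕ) (hk : 1 ≤ k)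
    (hmain : ∀ (s : Finset ℕ) (r : ℕ), Rooted par s r → 2 * s.card + 1 ≤ 3 ^ k →
      ∀ α β : ℝ, α < β → ∃ g, Lay par s k α β g) :
    ∀ (N : ℕ) (s : Finset ℕ), s.card ≤ N → ∀ (r v : ℕ), Rooted par s r → v ∈ s →
      2 * (s \ sub par s v).card + 1 ≤ 3 ^ k →
      (∀ c ∈ kids par s v, (sub par s c).card ≤ 3 ^ k) →
      (∀ c ∈ kids par s v, ∀ c' ∈ kids par s v,
        ¬(2 * (sub par s c).card + 1 ≤ 3 ^ k) →
        ¬(2 * (sub par s c').card + 1 ≤ 3 ^ k) → c = c') →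
      ∀ α β : ℝ, α < β →
      ∃ g γ, Lay par s (k + 1) α β g ∧ (g v).1 < γ ∧ ∀ i ∈ s, i ≠ v → γ < (g i).1 := by
  intro N
  induction N with
  | zero =>
    intro s hcard r v hroot hv hU hsz hhv α β hαβ
    exfalso
    have : s = ∅ := Finset.card_eq_zero.mp (Nat.le_zero.mp hcard)
    rw [this] at hv
    exact Finset.notMem_empty v hv
  | succ N ih =>
    intro s hcard r v hroot hv hU hsz hhv α β hαβ
    have hp3 : 0 < 3 ^ k := pow_pos (by norm_num) k
    by_cases hUne : (s \ sub par s v).Nonempty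
    · -- peel off U = s \ sub s v
      have hrns : r ∉ sub par s v := by
        intro hr
        obtain ⟨i0, hi0⟩ := hUne
        have : i0 ∈ sub par s v := mem_sub.mpr
          (desc_trans (hroot.2 i0 (Finset.mem_sdiff.mp hi0).1) (mem_sub.mp hr))
        exact (Finset.mem_sdiff.mp hi0).2 this
      have hUroot : Rooted par (s \ sub par s v) r := rooted_sdiff hroot hrns
      obtain ⟨gU, hgU⟩ := hmain (s \ sub par s v) r hUroot hU
        (cc α β (1/8)) (cc α β (3/8)) (cc_lt_cc hαβ (by norm_num))
      have hvv : v ∈ sub par s v := mem_sub.mpr (desc_refl hv)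
      have hcard2 : (sub par s v).card ≤ N := by
        have h1 : (sub par s v).card < s.card := by
          apply Finset.card_lt_card
          refine ⟨sub_subset, ?_⟩
          intro hss
          obtain ⟨i0, hi0⟩ := hUne
          exact (Finset.mem_sdiff.mp hi0).2 (hss (Finset.mem_sdiff.mp hi0).1)
        omega
      have hroot2 : Rooted par (sub par s v) v := rooted_sub hv
      have hU2 : 2 * ((sub par s v) \ sub par (sub par s v) v).card + 1 ≤ 3 ^ k := by
        rw [sub_eq_self_of_rooted hroot2, Finset.sdiff_self]
        simp only [Finset.card_empty]
        omega
      have hsz2 : ∀ c ∈ kids par (sub par s v) v,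
          (sub par (sub par s v) c).card ≤ 3 ^ k := by
        intro c hc
        rw [kids_in_sub hv] at hc
        rw [sub_in_sub hpar hv hc]
        exact hsz c hc
      have hhv2 : ∀ c ∈ kids par (sub par s v) v, ∀ c' ∈ kids par (sub par s v) v,
          ¬(2 * (sub par (sub par s v) c).card + 1 ≤ 3 ^ k) →
          ¬(2 * (sub par (sub par s v) c').card + 1 ≤ 3 ^ k) → c = c' := by
        intro c hc c' hc' hH hH'
        rw [kids_in_sub hv] at hc hc'
        rw [sub_in_sub hpar hv hc] at hH
        rw [sub_in_sub hpar hv hc'] at hH'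
        exact hhv c hc c' hc' hH hH'
      obtain ⟨g₂, γ₂, h₂, ha, hb⟩ := ih (sub par s v) hcard2 v v hroot2 hvv hU2 hsz2 hhv2
        (cc α β (1/2)) β (cc_lt hαβ (by norm_num))
      have hc₁ : ∀ i ∈ s \ sub par s v, par i ∈ sub par s v → par i = v := by
        intro i hi hpi
        exfalso
        have : Desc par s v i := desc_step (Finset.mem_sdiff.mp hi).1 (mem_sub.mp hpi)
        exact (Finset.mem_sdiff.mp hi).2 (mem_sub.mpr this)
      have hc₂ : ∀ i ∈ sub par s v, par i ∈ s \ sub par s v → i = v := by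
        intro i hi hpi
        by_contra hne
        have := desc_tail (mem_sub.mp hi) hne
        exact (Finset.mem_sdiff.mp hpi).2 (mem_sub.mpr this)
      have hdisj : Disjoint (s \ sub par s v) (sub par s v) := Finset.sdiff_disjoint
      obtain ⟨g, γ, hg1, hg2, hg3⟩ := glue hk hvv hdisj hαβ hgU h₂ ha hb hc₁ hc₂
      rw [Finset.sdiff_union_of_subset sub_subset] at hg1 hg3
      exact ⟨g, γ, hg1, hg2, hg3⟩
    · -- U = ∅ : s = sub s v
      have hseq : sub par s v = s := by
        apply Finset.Subset.antisymm sub_subset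
        intro i hi
        by_contra hns
        exact hUne ⟨i, Finset.mem_sdiff.mpr ⟨hi, hns⟩⟩
      by_cases hlight : ∃ d ∈ kids par s v, 2 * (sub par s d).card + 1 ≤ 3 ^ k
      · -- peel off a light child d
        obtain ⟨d, hd, hdl⟩ := hlight
        have hds : d ∈ s := (mem_kids.mp hd).1
        have hrootd : Rooted par (sub par s d) d := rooted_sub hds
        obtain ⟨gd, hgd⟩ := hmain (sub par s d) d hrootd hdl
          (cc α β (1/8)) (cc α β (3/8)) (cc_lt_cc hαβ (by norm_num))
        have hrnd : r ∉ sub par s d := by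
          intro hr
          have h1 : d ≤ r := (mem_sub.mp hr).root_le hpar
          have h2 : r ≤ v := (hroot.2 v hv).root_le hpar
          have h3 := v_lt_kid hpar hd
          omega
        have hroot2 := rooted_sdiff hroot hrnd
        have hsub_ne : (sub par s d).Nonempty := ⟨d, mem_sub.mpr (desc_refl hds)⟩
        have hcard2 : (s \ sub par s d).card ≤ N := by
          have h4 : (s \ sub par s d).card = s.card - (sub par s d).card :=
            Finset.card_sdiff_of_subset sub_subset
          have h5 : 0 < (sub par s d).card := Finset.card_pos.mpr hsub_ne
          omega
        have hvs2 : v ∈ s \ sub par s d :=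
          Finset.mem_sdiff.mpr ⟨hv, not_root_mem_sub_kid hpar hd⟩
        have hU2 : 2 * ((s \ sub par s d) \ sub par (s \ sub par s d) v).card + 1 ≤ 3 ^ k := by
          have he : (s \ sub par s d) \ sub par (s \ sub par s d) v = ∅ := by
            rw [sub_sdiff]
            ext i
            simp only [Finset.mem_sdiff, Finset.notMem_empty, iff_false, not_and, not_not]
            rintro ⟨his, hind⟩ hnn
            have hisv : i ∈ sub par s v := by rw [hseq]; exact his
            exact hind (hnn hisv)
          rw [he]
          simp only [Finset.card_empty]
          omega
        have hsz2 : ∀ c ∈ kids par (s \ sub par s d) v,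
            (sub par (s \ sub par s d) c).card ≤ 3 ^ k := by
          intro c hc
          rw [kids_sdiff hpar hd] at hc
          obtain ⟨hc1, -⟩ := Finset.mem_sdiff.mp hc
          rw [sub_sdiff]
          exact le_trans (Finset.card_le_card Finset.sdiff_subset) (hsz c hc1)
        have hhv2 : ∀ c ∈ kids par (s \ sub par s d) v, ∀ c' ∈ kids par (s \ sub par s d) v,
            ¬(2 * (sub par (s \ sub par s d) c).card + 1 ≤ 3 ^ k) →
            ¬(2 * (sub par (s \ sub par s d) c').card + 1 ≤ 3 ^ k) → c = c' := by
          intro c hc c' hc' hH hH'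
          rw [kids_sdiff hpar hd] at hc hc'
          obtain ⟨hc1, -⟩ := Finset.mem_sdiff.mp hc
          obtain ⟨hc1', -⟩ := Finset.mem_sdiff.mp hc'
          apply hhv c hc1 c' hc1'
          · rw [sub_sdiff] at hH
            have h6 := Finset.card_le_card
              (Finset.sdiff_subset : sub par s c \ sub par s d ⊆ sub par s c)
            omega
          · rw [sub_sdiff] at hH'
            have h6 := Finset.card_le_card
              (Finset.sdiff_subset : sub par s c' \ sub par s d ⊆ sub par s c')
            omega
        obtain ⟨g₂, γ₂, h₂, ha, hb⟩ := ih (s \ sub par s d) hcard2 r v hroot2 hvs2 hU2 hsz2 hhv2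
          (cc α β (1/2)) β (cc_lt hαβ (by norm_num))
        have hc₁ : ∀ i ∈ sub par s d, par i ∈ s \ sub par s d → par i = v := by
          intro i hi hpi
          by_cases hid : i = d
          · rw [hid]; exact (mem_kids.mp hd).2.1
          · exfalso
            have := desc_tail (mem_sub.mp hi) hid
            exact (Finset.mem_sdiff.mp hpi).2 (mem_sub.mpr this)
        have hc₂ : ∀ i ∈ s \ sub par s d, par i ∈ sub par s d → i = v := by
          intro i hi hpi
          exfalso
          have : Desc par s d i := desc_step (Finset.mem_sdiff.mp hi).1 (mem_sub.mp hpi)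
          exact (Finset.mem_sdiff.mp hi).2 (mem_sub.mpr this)
        have hdisj : Disjoint (sub par s d) (s \ sub par s d) :=
          (Finset.sdiff_disjoint).symm
        obtain ⟨g, γ, hg1, hg2, hg3⟩ := glue hk hvs2 hdisj hαβ hgd h₂ ha hb hc₁ hc₂
        have huni : sub par s d ∪ (s \ sub par s d) = s := by
          rw [Finset.union_comm]
          exact Finset.sdiff_union_of_subset sub_subset
        rw [huni] at hg1 hg3
        exact ⟨g, γ, hg1, hg2, hg3⟩
      · by_cases hkid : (kids par s v).Nonempty
        · -- unique heavy child: spine step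
          obtain ⟨y, hy⟩ := hkid
          push_neg at hlight
          have hyheavy : ¬(2 * (sub par s y).card + 1 ≤ 3 ^ k) := by
            have := hlight y hy; omega
          have hkuniq : ∀ c ∈ kids par s v, c = y := by
            intro c hc
            exact hhv c hc y hy (by have := hlight c hc; omega) hyheavy
          have hys : y ∈ s := (mem_kids.mp hy).1
          have hins : s = insert v (sub par s y) := by
            ext i
            simp only [Finset.mem_insert]
            constructor
            · intro his
              by_cases hiv : i = v
              · left; exact hiv
              · right
                have hisv : i ∈ sub par s v := by rw [hseq]; exact his
                obtain ⟨c, hc, hic⟩ := exists_kid_of_mem_sub hisv hiv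
                rw [hkuniq c hc] at hic
                exact hic
            · rintro (rfl | hi)
              · exact hv
              · exact sub_subset hi
          have hcard2 : (sub par s y).card ≤ N := by
            have h1 : sub par s y ⊆ s.erase v := by
              have h2 := kid_sub_subset_erase hpar hv hy
              rwa [hseq] at h2
            have h3 := Finset.card_le_card h1
            have h4 := Finset.card_erase_of_mem hv
            omega
          have hroot2 : Rooted par (sub par s y) y := rooted_sub hys
          have hU2 : 2 * ((sub par s y) \ sub par (sub par s y) y).card + 1 ≤ 3 ^ k := by
            rw [sub_eq_self_of_rooted hroot2, Finset.sdiff_self]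
            simp only [Finset.card_empty]
            omega
          have hycard : (sub par s y).card ≤ 3 ^ k := hsz y hy
          have hyy : y ∈ sub par s y := mem_sub.mpr (desc_refl hys)
          have hsz2 : ∀ c ∈ kids par (sub par s y) y,
              (sub par (sub par s y) c).card ≤ 3 ^ k := by
            intro c hc
            rw [kids_in_sub hys] at hc
            rw [sub_in_sub hpar hys hc]
            have h1 := Finset.card_le_card (kid_sub_subset_erase hpar hys hc)
            have h2 := Finset.card_erase_of_mem hyy
            omega
          have hhv2 : ∀ c ∈ kids par (sub par s y) y, ∀ c' ∈ kids par (sub par s y) y,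
              ¬(2 * (sub par (sub par s y) c).card + 1 ≤ 3 ^ k) →
              ¬(2 * (sub par (sub par s y) c').card + 1 ≤ 3 ^ k) → c = c' := by
            intro c hc c' hc' hH hH'
            rw [kids_in_sub hys] at hc hc'
            rw [sub_in_sub hpar hys hc] at hH
            rw [sub_in_sub hpar hys hc'] at hH'
            by_contra hne
            have hdisj2 := kids_sub_disjoint hpar hc hc' hne
            have hcup : (sub par s c ∪ sub par s c').card
                = (sub par s c).card + (sub par s c').card :=
              Finset.card_union_of_disjoint hdisj2
            have hsubu : sub par s c ∪ sub par s c' ⊆ (sub par s y).erase y :=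
              Finset.union_subset (kid_sub_subset_erase hpar hys hc)
                (kid_sub_subset_erase hpar hys hc')
            have h3 := Finset.card_le_card hsubu
            have h4 := Finset.card_erase_of_mem hyy
            obtain ⟨q, hq⟩ : Odd (3 ^ k) := Odd.pow (⟨1, by norm_num⟩ : Odd 3)
            omega
          obtain ⟨g₂, γ₂, h₂, ha, hb⟩ := ih (sub par s y) hcard2 y y hroot2 hyy hU2 hsz2 hhv2
            (cc α β (1/2)) β (cc_lt hαβ (by norm_num))
          have hvny : v ∉ sub par s y := not_root_mem_sub_kid hpar hy
          have hcr : ∀ i ∈ sub par s y, par i ∈ sub par s y ∨ (par i = v ∧ i = y) := by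
            intro i hi
            by_cases hiy : i = y
            · right; exact ⟨by rw [hiy]; exact (mem_kids.mp hy).2.1, hiy⟩
            · left; exact mem_sub.mpr (desc_tail (mem_sub.mp hi) hiy)
          have hpvn : par v ∉ sub par s y := by
            intro hc
            have h1 : y ≤ par v := (mem_sub.mp hc).root_le hpar
            have h2 := hpar v
            have h3 := v_lt_kid hpar hy
            omega
          obtain ⟨g, γ, hg1, hg2, hg3⟩ :=
            glueSpine hk hyy hvny hαβ h₂ ha hb hcr hpvn
          rw [← hins] at hg1 hg3
          exact ⟨g, γ, hg1, hg2, hg3⟩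
        · -- no children: s = {v}
          have hsv : s = {v} := by
            ext i
            simp only [Finset.mem_singleton]
            constructor
            · intro his
              by_contra hiv
              have hisv : i ∈ sub par s v := by rw [hseq]; exact his
              obtain ⟨c, hc, -⟩ := exists_kid_of_mem_sub hisv hiv
              exact hkid ⟨c, hc⟩
            · rintro rfl; exact hv
          refine ⟨(fun _ => (cc α β (1/3), cc α β (2/3))), cc α β (5/12), ?_, ?_, ?_⟩
          · rw [hsv]; exact Lay.single hαβ (by omega)
          · exact cc_lt_cc hαβ (by norm_num)
          · intro i hi hne
            rw [hsv, Finset.mem_singleton] at hi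
            exact absurd hi hne



variable {par : ℕ → ℕ}

theorem mainLemma (hpar : ∀ i, par i ≤ i) :
    ∀ (k : ℕ) (s : Finset ℕ) (r : ℕ), Rooted par s r → 2 * s.card + 1 ≤ 3 ^ k →
      ∀ α β : ℝ, α < β → ∃ g, Lay par s k α β g := by
  intro k
  induction k with
  | zero =>
    intro s r hroot hbud α β hαβ
    exfalso
    have := Finset.card_pos.mpr ⟨r, hroot.1⟩
    simp only [pow_zero] at hbud
    omega
  | succ k ih =>
    intro s r hroot hbud α β hαβ
    have hp3 : 0 < 3 ^ k := pow_pos (by norm_num) k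
    have hpow : 3 ^ (k + 1) = 3 * 3 ^ k := by rw [pow_succ]; ring
    have hm1 : 1 ≤ s.card := Finset.card_pos.mpr ⟨r, hroot.1⟩
    by_cases hone : s.card = 1
    · obtain ⟨a, ha⟩ := Finset.card_eq_one.mp hone
      refine ⟨(fun _ => (cc α β (1/3), cc α β (2/3))), ?_⟩
      rw [ha]
      exact Lay.single hαβ (by omega)
    · have hk : 1 ≤ k := by
        by_contra hk0
        have hkk : k = 0 := by omega
        rw [hkk] at hbud
        have h31 : (3:ℕ) ^ (0 + 1) = 3 := by norm_num
        omega
      -- apex selection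
      have hcand : r ∈ s.filter (fun x => (2 * s.card + 3) / 3 ≤ (sub par s x).card) := by
        rw [Finset.mem_filter]
        refine ⟨hroot.1, ?_⟩
        rw [sub_eq_self_of_rooted hroot]
        omega
      obtain ⟨v, hvmem, hvmin⟩ := Finset.exists_min_image _
        (fun x => (sub par s x).card) ⟨r, hcand⟩
      obtain ⟨hvs, hvμ⟩ := Finset.mem_filter.mp hvmem
      have hvsub : (sub par s v).card ≤ s.card := Finset.card_le_card sub_subset
      have hvv : v ∈ sub par s v := mem_sub.mpr (desc_refl hvs)
      have hkidcard : ∀ c ∈ kids par s v, (sub par s c).card < (2 * s.card + 3) / 3 := by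
        intro c hc
        by_contra hcon
        push_neg at hcon
        have hcmem : c ∈ s.filter (fun x => (2 * s.card + 3) / 3 ≤ (sub par s x).card) :=
          Finset.mem_filter.mpr ⟨(mem_kids.mp hc).1, hcon⟩
        have h1 := hvmin c hcmem
        have h2 := Finset.card_le_card (kid_sub_subset_erase hpar hvs hc)
        have h3 := Finset.card_erase_of_mem hvv
        have h4 : 1 ≤ (sub par s v).card := Finset.card_pos.mpr ⟨v, hvv⟩
        omega
      have hsz : ∀ c ∈ kids par s v, (sub par s c).card ≤ 3 ^ k := by
        intro c hc
        have := hkidcard c hc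
        omega
      have hU : 2 * (s \ sub par s v).card + 1 ≤ 3 ^ k := by
        have h4 : (s \ sub par s v).card = s.card - (sub par s v).card :=
          Finset.card_sdiff_of_subset sub_subset
        omega
      by_cases h2 : ∃ c₁ ∈ kids par s v, ∃ c₂ ∈ kids par s v,
          c₁ ≠ c₂ ∧ ¬(2 * (sub par s c₁).card + 1 ≤ 3 ^ k) ∧
          ¬(2 * (sub par s c₂).card + 1 ≤ 3 ^ k)
      · -- two heavy children
        obtain ⟨c₁, hc₁k, c₂, hc₂k, hnec, hH₁, hH₂⟩ := h2
        obtain ⟨q, hq⟩ : Odd (3 ^ k) := Odd.pow (⟨1, by norm_num⟩ : Odd 3)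
        have hbud' : 2 * s.card + 1 ≤ 3 * (2 * q + 1) := by
          rw [hpow, hq] at hbud; exact hbud
        have hthird : ∀ c ∈ kids par s v, ¬(2 * (sub par s c).card + 1 ≤ 3 ^ k) →
            c = c₁ ∨ c = c₂ := by
          intro c hc hH
          by_contra hcc
          push_neg at hcc
          obtain ⟨hne1, hne2⟩ := hcc
          have hd12 := kids_sub_disjoint hpar hc₁k hc₂k hnec
          have hd1c := kids_sub_disjoint hpar hc₁k hc (fun h => hne1 h.symm)
          have hd2c := kids_sub_disjoint hpar hc₂k hc (fun h => hne2 h.symm)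
          have hcup1 : (sub par s c₁ ∪ sub par s c₂).card
              = (sub par s c₁).card + (sub par s c₂).card :=
            Finset.card_union_of_disjoint hd12
          have hdU : Disjoint (sub par s c₁ ∪ sub par s c₂) (sub par s c) :=
            Finset.disjoint_union_left.mpr ⟨hd1c, hd2c⟩
          have hcup2 : (sub par s c₁ ∪ sub par s c₂ ∪ sub par s c).card
              = (sub par s c₁).card + (sub par s c₂).card + (sub par s c).card := by
            rw [Finset.card_union_of_disjoint hdU, hcup1]
          have hsubu : sub par s c₁ ∪ sub par s c₂ ∪ sub par s c ⊆ s.erase v := by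
            have hmono : (sub par s v).erase v ⊆ s.erase v :=
              Finset.erase_subset_erase v sub_subset
            refine Finset.union_subset (Finset.union_subset ?_ ?_) ?_
            · exact (kid_sub_subset_erase hpar hvs hc₁k).trans hmono
            · exact (kid_sub_subset_erase hpar hvs hc₂k).trans hmono
            · exact (kid_sub_subset_erase hpar hvs hc).trans hmono
          have h3 := Finset.card_le_card hsubu
          have h4 := Finset.card_erase_of_mem hvs
          rw [hq] at hH hH₁ hH₂
          omega
        -- branch layout on sub s c₁, then reflect
        have hc₁s : c₁ ∈ s := (mem_kids.mp hc₁k).1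
        have hc₁sub : c₁ ∈ sub par s c₁ := mem_sub.mpr (desc_refl hc₁s)
        have hc₁card : (sub par s c₁).card ≤ 3 ^ k := hsz c₁ hc₁k
        have hroot1 : Rooted par (sub par s c₁) c₁ := rooted_sub hc₁s
        have hU1 : 2 * ((sub par s c₁) \ sub par (sub par s c₁) c₁).card + 1 ≤ 3 ^ k := by
          rw [sub_eq_self_of_rooted hroot1, Finset.sdiff_self]
          simp only [Finset.card_empty]
          omega
        have hsz1 : ∀ c ∈ kids par (sub par s c₁) c₁,
            (sub par (sub par s c₁) c).card ≤ 3 ^ k := by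
          intro c hc
          rw [kids_in_sub hc₁s] at hc
          rw [sub_in_sub hpar hc₁s hc]
          have h5 := Finset.card_le_card (kid_sub_subset_erase hpar hc₁s hc)
          have h6 := Finset.card_erase_of_mem hc₁sub
          omega
        have hhv1 : ∀ c ∈ kids par (sub par s c₁) c₁, ∀ c' ∈ kids par (sub par s c₁) c₁,
            ¬(2 * (sub par (sub par s c₁) c).card + 1 ≤ 3 ^ k) →
            ¬(2 * (sub par (sub par s c₁) c').card + 1 ≤ 3 ^ k) → c = c' := by
          intro c hc c' hc' hH hH'
          rw [kids_in_sub hc₁s] at hc hc'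
          rw [sub_in_sub hpar hc₁s hc] at hH
          rw [sub_in_sub hpar hc₁s hc'] at hH'
          by_contra hne
          have hd := kids_sub_disjoint hpar hc hc' hne
          have hcup := Finset.card_union_of_disjoint hd
          have hsubu := Finset.union_subset (kid_sub_subset_erase hpar hc₁s hc)
            (kid_sub_subset_erase hpar hc₁s hc')
          have h3 := Finset.card_le_card hsubu
          have h4 := Finset.card_erase_of_mem hc₁sub
          rw [hq] at hH hH'
          omega
        obtain ⟨g₁', γ₁', h₁', ra', rb'⟩ := apexLemma hpar k hk ih (sub par s c₁).card
          (sub par s c₁) le_rfl c₁ c₁ hroot1 hc₁sub hU1 hsz1 hhv1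
          α (cc α β (1/2)) (lt_cc hαβ (by norm_num))
        have h₁ : Lay par (sub par s c₁) (k+1) α (cc α β (1/2))
            (fun i => (α + cc α β (1/2) - (g₁' i).2, α + cc α β (1/2) - (g₁' i).1)) :=
          h₁'.reflect
        have ra : α + cc α β (1/2) - γ₁'
            < ((fun i => (α + cc α β (1/2) - (g₁' i).2, α + cc α β (1/2) - (g₁' i).1)) c₁).2 := by
          show α + cc α β (1/2) - γ₁' < α + cc α β (1/2) - (g₁' c₁).1
          linarith
        have rb : ∀ i ∈ sub par s c₁, i ≠ c₁ →
            ((fun i => (α + cc α β (1/2) - (g₁' i).2, α + cc α β (1/2) - (g₁' i).1)) i).2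
              < α + cc α β (1/2) - γ₁' := by
          intro i hi hne
          show α + cc α β (1/2) - (g₁' i).1 < α + cc α β (1/2) - γ₁'
          have := rb' i hi hne
          linarith
        -- the rest of the tree
        have hrn1 : r ∉ sub par s c₁ := by
          intro hr
          have ha1 : c₁ ≤ r := (mem_sub.mp hr).root_le hpar
          have ha2 : r ≤ v := (hroot.2 v hvs).root_le hpar
          have ha3 := v_lt_kid hpar hc₁k
          omega
        have hroot2 : Rooted par (s \ sub par s c₁) r := rooted_sdiff hroot hrn1
        have hvs2 : v ∈ s \ sub par s c₁ :=
          Finset.mem_sdiff.mpr ⟨hvs, not_root_mem_sub_kid hpar hc₁k⟩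
        have hAB : sub par s c₁ ⊆ sub par s v := kid_sub_subset hpar hvs hc₁k
        have hU22 : 2 * ((s \ sub par s c₁) \ sub par (s \ sub par s c₁) v).card + 1
            ≤ 3 ^ k := by
          have he : (s \ sub par s c₁) \ sub par (s \ sub par s c₁) v
              = s \ sub par s v := by
            rw [sub_sdiff]
            ext i
            simp only [Finset.mem_sdiff]
            constructor
            · rintro ⟨⟨his, hnA⟩, hnn⟩
              exact ⟨his, fun hB => hnn ⟨hB, hnA⟩⟩
            · rintro ⟨his, hnB⟩
              exact ⟨⟨his, fun hA => hnB (hAB hA)⟩, fun hx => hnB hx.1⟩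
          rw [he]
          exact hU
        have hsz22 : ∀ c ∈ kids par (s \ sub par s c₁) v,
            (sub par (s \ sub par s c₁) c).card ≤ 3 ^ k := by
          intro c hc
          rw [kids_sdiff hpar hc₁k] at hc
          obtain ⟨hc1, -⟩ := Finset.mem_sdiff.mp hc
          rw [sub_sdiff]
          exact le_trans (Finset.card_le_card Finset.sdiff_subset) (hsz c hc1)
        have hhv22 : ∀ c ∈ kids par (s \ sub par s c₁) v,
            ∀ c' ∈ kids par (s \ sub par s c₁) v,
            ¬(2 * (sub par (s \ sub par s c₁) c).card + 1 ≤ 3 ^ k) →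
            ¬(2 * (sub par (s \ sub par s c₁) c').card + 1 ≤ 3 ^ k) → c = c' := by
          intro c hc c' hc' hH hH'
          rw [kids_sdiff hpar hc₁k] at hc hc'
          obtain ⟨hck, hcne⟩ := Finset.mem_sdiff.mp hc
          obtain ⟨hck', hcne'⟩ := Finset.mem_sdiff.mp hc'
          rw [Finset.mem_singleton] at hcne hcne'
          have hHs : ¬(2 * (sub par s c).card + 1 ≤ 3 ^ k) := by
            rw [sub_sdiff] at hH
            have := Finset.card_le_card
              (Finset.sdiff_subset : sub par s c \ sub par s c₁ ⊆ sub par s c)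
            omega
          have hHs' : ¬(2 * (sub par s c').card + 1 ≤ 3 ^ k) := by
            rw [sub_sdiff] at hH'
            have := Finset.card_le_card
              (Finset.sdiff_subset : sub par s c' \ sub par s c₁ ⊆ sub par s c')
            omega
          rcases hthird c hck hHs with h | h
          · exact absurd h hcne
          · rcases hthird c' hck' hHs' with h' | h'
            · exact absurd h' hcne'
            · rw [h, h']
        obtain ⟨g₂, γ₂, h₂, hanch, hbanch⟩ := apexLemma hpar k hk ih (s \ sub par s c₁).card
          (s \ sub par s c₁) le_rfl r v hroot2 hvs2 hU22 hsz22 hhv22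
          (cc α β (1/2)) β (cc_lt hαβ (by norm_num))
        have hx₁ : ∀ i ∈ sub par s c₁, par i ∈ s \ sub par s c₁ → (i = c₁ ∧ par i = v) := by
          intro i hi hpi
          by_cases hic : i = c₁
          · exact ⟨hic, by rw [hic]; exact (mem_kids.mp hc₁k).2.1⟩
          · exfalso
            have := desc_tail (mem_sub.mp hi) hic
            exact (Finset.mem_sdiff.mp hpi).2 (mem_sub.mpr this)
        have hx₂ : ∀ i ∈ s \ sub par s c₁, par i ∉ sub par s c₁ := by
          intro i hi hcon
          have : Desc par s c₁ i := desc_step (Finset.mem_sdiff.mp hi).1 (mem_sub.mp hcon)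
          exact (Finset.mem_sdiff.mp hi).2 (mem_sub.mpr this)
        have hdisj : Disjoint (sub par s c₁) (s \ sub par s c₁) :=
          Finset.sdiff_disjoint.symm
        obtain ⟨g, hg⟩ := glue2 hk hvs2 hc₁sub hdisj hαβ h₁ ra rb h₂ hanch hbanch hx₁ hx₂
        have huni : sub par s c₁ ∪ (s \ sub par s c₁) = s := by
          rw [Finset.union_comm]
          exact Finset.sdiff_union_of_subset sub_subset
        rw [huni] at hg
        exact ⟨g, hg⟩
      · -- at most one heavy child
        have hhv : ∀ c ∈ kids par s v, ∀ c' ∈ kids par s v,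
            ¬(2 * (sub par s c).card + 1 ≤ 3 ^ k) →
            ¬(2 * (sub par s c').card + 1 ≤ 3 ^ k) → c = c' := by
          intro c hc c' hc' hH hH'
          by_contra hne
          exact h2 ⟨c, hc, c', hc', hne, hH, hH'⟩
        obtain ⟨g, γ, hg, -, -⟩ := apexLemma hpar k hk ih s.card s le_rfl r v hroot hvs
          hU hsz hhv α β hαβ
        exact ⟨g, hg⟩



variable {par : ℕ → ℕ}

/-- Walk up the chain to prove interval-hull covering (left version). -/
lemma walkA {g : ℕ → ℝ × ℝ} {s : Finset ℕ} {K : ℕ} {α β : ℝ}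
    (hLay : Lay par s K α β g) (T : Finset ℕ) (hTs : T ⊆ s) (nv : ℕ)
    (hstep : ∀ i ∈ T, i ≠ nv → par i ∈ T ∧ par i < i) (p : ℝ) :
    ∀ i ∈ T, (g i).1 ≤ p → (∃ j ∈ T, (g j).1 ≤ p ∧ p ≤ (g j).2) ∨ (g nv).1 ≤ p := by
  intro i
  induction i using Nat.strong_induction_on with
  | _ i IH =>
    intro hiT hle
    by_cases hp2 : p ≤ (g i).2
    · exact Or.inl ⟨i, hiT, hle, hp2⟩
    · push_neg at hp2
      by_cases hiv : i = nv
      · rw [hiv] at hle; exact Or.inr hle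
      · obtain ⟨hpT, hplt⟩ := hstep i hiT hiv
        have hedge := hLay.edge i (hTs hiT) (hTs hpT) (by omega)
        exact IH (par i) hplt hpT (by linarith [hedge.2])

/-- Walk up the chain (right version). -/
lemma walkB {g : ℕ → ℝ × ℝ} {s : Finset ℕ} {K : ℕ} {α β : ℝ}
    (hLay : Lay par s K α β g) (T : Finset ℕ) (hTs : T ⊆ s) (nv : ℕ)
    (hstep : ∀ i ∈ T, i ≠ nv → par i ∈ T ∧ par i < i) (p : ℝ) :
    ∀ i ∈ T, p ≤ (g i).2 → (∃ j ∈ T, (g j).1 ≤ p ∧ p ≤ (g j).2) ∨ p ≤ (g nv).2 := by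
  intro i
  induction i using Nat.strong_induction_on with
  | _ i IH =>
    intro hiT hle
    by_cases hp1 : (g i).1 ≤ p
    · exact Or.inl ⟨i, hiT, hp1, hle⟩
    · push_neg at hp1
      by_cases hiv : i = nv
      · rw [hiv] at hle; exact Or.inr hle
      · obtain ⟨hpT, hplt⟩ := hstep i hiT hiv
        have hedge := hLay.edge i (hTs hiT) (hTs hpT) (by omega)
        exact IH (par i) hplt hpT (by linarith [hedge.1])

section Transfer

variable {V : Type*} [Fintype V] (H : SimpleGraph V) (e : V ≃ Fin (Fintype.card V))

/-- Index of a vertex, in `{1, …, m}`. -/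
noncomputable def idxF (v : V) : ℕ := (e v : ℕ) + 1

/-- The earlier neighbours of `v`. -/
noncomputable def nbF (v : V) : Finset V :=
  Finset.univ.filter (fun w => H.Adj v w ∧ e w < e v)

noncomputable def parVF (v : V) : ℕ :=
  (insert 0 ((nbF H e v).image (idxF e))).max' (Finset.insert_nonempty 0 _)

noncomputable def parF (i : ℕ) : ℕ :=
  if h : ∃ v, idxF e v = i then parVF H e h.choose else 0

noncomputable def bagF (i : ℕ) : Finset V :=
  if h : ∃ v, idxF e v = i then insert h.choose (nbF H e h.choose) else ∅

noncomputable def TvF (v : V) : Finset ℕ :=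
  (Finset.range (Fintype.card V + 1)).filter (fun i => v ∈ bagF H e i)

lemma idxF_inj : Function.Injective (idxF e) := by
  intro a b h
  have : (e a : ℕ) = (e b : ℕ) := by
    have := h
    unfold idxF at this
    omega
  exact e.injective (Fin.ext this)

lemma idxF_le (v : V) : idxF e v ≤ Fintype.card V := by
  have := (e v).isLt
  unfold idxF
  omega

lemma idxF_pos (v : V) : 1 ≤ idxF e v := by
  unfold idxF; omega

lemma mem_nbF {v w : V} : w ∈ nbF H e v ↔ H.Adj v w ∧ e w < e v := by
  simp [nbF]

lemma idxF_surj {i : ℕ} (h1 : 1 ≤ i) (h2 : i ≤ Fintype.card V) :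
    ∃ v, idxF e v = i := by
  refine ⟨e.symm ⟨i - 1, by omega⟩, ?_⟩
  unfold idxF
  rw [Equiv.apply_symm_apply]
  simp
  omega

lemma parVF_lt (v : V) : parVF H e v < idxF e v := by
  unfold parVF
  rw [Finset.max'_lt_iff]
  intro y hy
  rcases Finset.mem_insert.mp hy with rfl | hy
  · exact idxF_pos e v
  · obtain ⟨w, hw, rfl⟩ := Finset.mem_image.mp hy
    have h1 := (mem_nbF H e).mp hw
    have h2 : (e w : ℕ) < (e v : ℕ) := h1.2
    unfold idxF
    omega

lemma parVF_ge (v : V) {w : V} (hw : w ∈ nbF H e v) : idxF e w ≤ parVF H e v :=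
  Finset.le_max' _ _ (Finset.mem_insert_of_mem (Finset.mem_image_of_mem _ hw))

lemma parF_idx (v : V) : parF H e (idxF e v) = parVF H e v := by
  unfold parF
  rw [dif_pos ⟨v, rfl⟩]
  congr 1
  exact idxF_inj e (⟨v, rfl⟩ : ∃ u, idxF e u = idxF e v).choose_spec

lemma parF_le (i : ℕ) : parF H e i ≤ i := by
  unfold parF
  split
  · next h =>
    have h1 := parVF_lt H e h.choose
    rw [h.choose_spec] at h1
    omega
  · omega

lemma bagF_idx (v : V) : bagF H e (idxF e v) = insert v (nbF H e v) := by
  unfold bagF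
  rw [dif_pos ⟨v, rfl⟩]
  have := idxF_inj e (⟨v, rfl⟩ : ∃ u, idxF e u = idxF e v).choose_spec
  rw [this]

lemma mem_TvF_self (v : V) : idxF e v ∈ TvF H e v := by
  unfold TvF
  rw [Finset.mem_filter, Finset.mem_range]
  refine ⟨by have := idxF_le e v; omega, ?_⟩
  rw [bagF_idx]
  exact Finset.mem_insert_self v _

lemma TvF_subset (v : V) : TvF H e v ⊆ Finset.range (Fintype.card V + 1) :=
  Finset.filter_subset _ _

lemma rootedF : Rooted (parF H e) (Finset.range (Fintype.card V + 1)) 0 := by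
  constructor
  · simp
  · intro i
    induction i using Nat.strong_induction_on with
    | _ i IH =>
      intro hi
      by_cases hi0 : i = 0
      · rw [hi0]; exact desc_refl (by simp)
      · have h1 : 1 ≤ i := by omega
        have h2 : i ≤ Fintype.card V := by
          rw [Finset.mem_range] at hi; omega
        obtain ⟨v, hv⟩ := idxF_surj e h1 h2
        have hlt : parF H e i < i := by
          rw [← hv, parF_idx]
          exact parVF_lt H e v
        have hmem : parF H e i ∈ Finset.range (Fintype.card V + 1) := by
          rw [Finset.mem_range] at hi ⊢
          omega
        exact desc_step hi (IH _ hlt hmem)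

end Transfer



section Transfer2

variable {V : Type*} [Fintype V] {H : SimpleGraph V} {t : ℕ}
  (e : V ≃ Fin (Fintype.card V))

lemma nbF_coe (v : V) : ({w | H.Adj v w ∧ e w < e v} : Set V) = ↑(nbF H e v) := by
  ext w
  simp [nbF]

lemma nbF_card (he : ∀ v : V, H.IsClique {w | H.Adj v w ∧ e w < e v} ∧
      {w | H.Adj v w ∧ e w < e v}.ncard ≤ t) (v : V) : (nbF H e v).card ≤ t := by
  have h := (he v).2
  rw [nbF_coe e, Set.ncard_coe_finset] at h
  exact h

lemma bagF_card (he : ∀ v : V, H.IsClique {w | H.Adj v w ∧ e w < e v} ∧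
      {w | H.Adj v w ∧ e w < e v}.ncard ≤ t) (i : ℕ) : (bagF H e i).card ≤ t + 1 := by
  unfold bagF
  split
  · next h =>
    calc (insert h.choose (nbF H e h.choose)).card
        ≤ (nbF H e h.choose).card + 1 := Finset.card_insert_le _ _
    _ ≤ t + 1 := by have := nbF_card e he h.choose; omega
  · simp

lemma TvF_step (he : ∀ v : V, H.IsClique {w | H.Adj v w ∧ e w < e v} ∧
      {w | H.Adj v w ∧ e w < e v}.ncard ≤ t) {v : V} {i : ℕ}
    (hi : i ∈ TvF H e v) (hne : i ≠ idxF e v) :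
    parF H e i ∈ TvF H e v ∧ parF H e i < i := by
  classical
  obtain ⟨hir, hib⟩ := Finset.mem_filter.mp hi
  rw [Finset.mem_range] at hir
  have hex : ∃ w, idxF e w = i := by
    by_contra hcon
    unfold bagF at hib
    rw [dif_neg hcon] at hib
    exact Finset.notMem_empty v hib
  obtain ⟨w, hw⟩ := hex
  rw [← hw, bagF_idx] at hib
  have hvw : v ≠ w := by
    intro h; rw [h] at hne; exact hne hw.symm
  have hvnb : v ∈ nbF H e w := by
    rcases Finset.mem_insert.mp hib with h | h
    · exact absurd h hvw
    · exact h
  have hpar : parF H e i = parVF H e w := by rw [← hw, parF_idx]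
  have hplt : parF H e i < i := by
    rw [hpar, ← hw]; exact parVF_lt H e w
  refine ⟨?_, hplt⟩
  -- parVF w = idx u for some u ∈ nb w maximal
  have hge : idxF e v ≤ parVF H e w := parVF_ge H e w hvnb
  have hmem := Finset.max'_mem (insert 0 ((nbF H e w).image (idxF e)))
    (Finset.insert_nonempty 0 _)
  rw [show (insert 0 ((nbF H e w).image (idxF e))).max'
      (Finset.insert_nonempty 0 _) = parVF H e w from rfl] at hmem
  rcases Finset.mem_insert.mp hmem with h0 | himg
  · exfalso
    have := idxF_pos e v
    omega
  · obtain ⟨u, hu, huv⟩ := Finset.mem_image.mp himg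
    unfold TvF
    rw [Finset.mem_filter, Finset.mem_range]
    have hule : idxF e u ≤ Fintype.card V := idxF_le e u
    constructor
    · omega
    · rw [hpar, ← huv, bagF_idx]
      by_cases hvu : v = u
      · rw [hvu]; exact Finset.mem_insert_self u _
      · apply Finset.mem_insert_of_mem
        rw [mem_nbF]
        have hucl := (mem_nbF H e).mp hu
        have hvcl := (mem_nbF H e).mp hvnb
        have hadj : H.Adj u v := by
          have hcl := (he w).1
          rw [nbF_coe e] at hcl
          exact (hcl (Finset.mem_coe.mpr hu) (Finset.mem_coe.mpr hvnb)
            (fun hh => hvu hh.symm))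
        have hlt : e v < e u := by
          have h1 : idxF e v ≤ idxF e u := by rw [huv]; exact hge
          have h2 : idxF e v ≠ idxF e u := fun hh => hvu (idxF_inj e hh)
          rw [Fin.lt_def]
          unfold idxF at h1 h2
          omega
        exact ⟨hadj, hlt⟩

end Transfer2

/-- Arithmetic: `K := ⌊log₃(2m+1)⌋ + 1` satisfies `2(m+1)+1 ≤ 3^K`. -/
lemma logb_bound (m : ℕ) (hm : 1 ≤ m) :
    ∃ K : ℕ, 2 * (m + 1) + 1 ≤ 3 ^ K ∧
      (K : ℤ) = ⌊Real.logb 3 (2 * (m : ℝ) + 1) + 1⌋ := by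
  have hm' : (1:ℝ) ≤ (m:ℝ) := by exact_mod_cast hm
  set x : ℝ := 2 * (m : ℝ) + 1 with hx
  have hx3 : (3:ℝ) ≤ x := by rw [hx]; linarith
  have hx0 : (0:ℝ) < x := by linarith
  have hlog1 : (1:ℝ) ≤ Real.logb 3 x := by
    have h1 : Real.logb 3 3 ≤ Real.logb 3 x :=
      Real.logb_le_logb_of_le (by norm_num) (by norm_num) hx3
    rwa [Real.logb_self_eq_one (by norm_num)] at h1
  set j : ℤ := ⌊Real.logb 3 x⌋ with hj
  have hj1 : 1 ≤ j := by
    rw [hj]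
    exact_mod_cast Int.le_floor.mpr (by exact_mod_cast hlog1)
  set K : ℕ := j.toNat + 1 with hK
  have h5 : (K : ℤ) = j + 1 := by rw [hK]; push_cast; omega
  have h3 : ((j:ℝ) + 1) = (K : ℝ) := by
    calc (j:ℝ) + 1 = ((j + 1 : ℤ) : ℝ) := by push_cast; ring
    _ = ((K : ℤ) : ℝ) := by rw [h5]
    _ = (K : ℝ) := by push_cast; ring
  have hup : x < (3:ℝ) ^ ((j:ℝ) + 1) := by
    have h1 : Real.logb 3 x < (j:ℝ) + 1 := by
      rw [hj]; exact Int.lt_floor_add_one _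
    calc x = (3:ℝ) ^ Real.logb 3 x :=
          (Real.rpow_logb (by norm_num) (by norm_num) hx0).symm
    _ < (3:ℝ) ^ ((j:ℝ) + 1) :=
          Real.rpow_lt_rpow_of_exponent_lt (by norm_num) h1
  have hup2 : x < ((3 ^ K : ℕ) : ℝ) := by
    have h2 : (3:ℝ) ^ ((j:ℝ) + 1) = ((3 ^ K : ℕ) : ℝ) := by
      rw [h3, Real.rpow_natCast]
      push_cast
      ring
    rwa [h2] at hup
  have hnat : 2 * m + 1 < 3 ^ K := by
    have h4 : ((2 * m + 1 : ℕ) : ℝ) < ((3 ^ K : ℕ) : ℝ) := by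
      rw [hx] at hup2
      push_cast
      push_cast at hup2
      linarith
    exact_mod_cast h4
  obtain ⟨q, hq⟩ : Odd (3 ^ K) := Odd.pow (⟨1, by norm_num⟩ : Odd 3)
  refine ⟨K, by omega, ?_⟩
  have hfl : ⌊Real.logb 3 x + 1⌋ = j + 1 := by
    rw [hj]
    exact_mod_cast Int.floor_add_one _
  rw [hfl]
  omega



lemma perturb {V : Type*} [Fintype V] (f₀ : V → ℝ × ℝ) (B : ℕ)
    (hprop : ∀ v, (f₀ v).1 < (f₀ v).2)
    (hdepth : ∀ p : ℝ,
      (Finset.univ.filter (fun v : V => (f₀ v).1 ≤ p ∧ p ≤ (f₀ v).2)).card ≤ B)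
    (idx : V → ℕ) (hidx : Function.Injective idx) (M : ℕ) (hM : ∀ v, idx v < M)
    (hM0 : 0 < M) :
    ∃ f : V → ℝ × ℝ,
      (∀ v, (f v).1 < (f v).2) ∧
      (∀ v w, v ≠ w → (f v).1 ≠ (f w).1 ∧ (f v).1 ≠ (f w).2 ∧
        (f v).2 ≠ (f w).1 ∧ (f v).2 ≠ (f w).2) ∧
      (∀ v, (f v).1 < (f₀ v).1 ∧ (f₀ v).2 < (f v).2) ∧
      (∀ p : ℝ,
        (Finset.univ.filter (fun v : V => (f v).1 ≤ p ∧ p ≤ (f v).2)).card ≤ B) := by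
  classical
  set E : Finset ℝ := Finset.univ.image (fun v : V => (f₀ v).1) ∪
    Finset.univ.image (fun v : V => (f₀ v).2) with hE
  have hE1 : ∀ v : V, (f₀ v).1 ∈ E := by
    intro v
    rw [hE]
    exact Finset.mem_union_left _ (Finset.mem_image_of_mem _ (Finset.mem_univ v))
  have hE2 : ∀ v : V, (f₀ v).2 ∈ E := by
    intro v
    rw [hE]
    exact Finset.mem_union_right _ (Finset.mem_image_of_mem _ (Finset.mem_univ v))
  set D : Finset ℝ :=
    ((E ×ˢ E).image (fun q : ℝ × ℝ => |q.1 - q.2|)).filter (fun x => 0 < x) with hD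
  set δ : ℝ := if h : D.Nonempty then D.min' h else 1 with hδ
  have hδ0 : 0 < δ := by
    rw [hδ]
    split
    · next h => exact (Finset.mem_filter.mp (D.min'_mem h)).2
    · norm_num
  have hgap : ∀ x ∈ E, ∀ y ∈ E, x ≠ y → δ ≤ |x - y| := by
    intro x hx y hy hne
    have hmem : |x - y| ∈ D := by
      rw [hD, Finset.mem_filter]
      constructor
      · have hp : (x, y) ∈ E ×ˢ E := Finset.mem_product.mpr ⟨hx, hy⟩
        exact Finset.mem_image_of_mem (fun q : ℝ × ℝ => |q.1 - q.2|) hp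
      · exact abs_pos.mpr (sub_ne_zero.mpr hne)
    rw [hδ, dif_pos ⟨_, hmem⟩]
    exact Finset.min'_le _ _ hmem
  set ε : ℝ := δ / (8 * M) with hε
  have hMR : (0:ℝ) < M := by exact_mod_cast hM0
  have hε0 : 0 < ε := by rw [hε]; positivity
  -- perturbation amounts
  set dl : V → ℝ := fun v => ε * ((2 * idx v + 1 : ℕ) : ℝ) with hdl
  set dr : V → ℝ := fun v => ε * ((2 * idx v + 2 : ℕ) : ℝ) with hdr
  have hdl_pos : ∀ v, 0 < dl v := by
    intro v; rw [hdl]; apply mul_pos hε0; positivity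
  have hdr_pos : ∀ v, 0 < dr v := by
    intro v; rw [hdr]; apply mul_pos hε0; positivity
  have hbound : ∀ (c : ℕ), (c : ℝ) ≤ 2 * M → ε * c ≤ δ / 4 := by
    intro c hc2
    rw [hε, div_mul_eq_mul_div, div_le_div_iff₀ (by positivity) (by norm_num)]
    nlinarith [Nat.cast_nonneg (α := ℝ) c]
  have hdl_le : ∀ v, dl v ≤ δ / 4 := by
    intro v
    rw [hdl]
    apply hbound
    have := hM v
    exact_mod_cast (by omega : 2 * idx v + 1 ≤ 2 * M)
  have hdr_le : ∀ v, dr v ≤ δ / 4 := by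
    intro v
    rw [hdr]
    apply hbound
    have := hM v
    exact_mod_cast (by omega : 2 * idx v + 2 ≤ 2 * M)
  set f : V → ℝ × ℝ := fun v => ((f₀ v).1 - dl v, (f₀ v).2 + dr v) with hf
  have hf1 : ∀ v, (f v).1 = (f₀ v).1 - dl v := fun v => rfl
  have hf2 : ∀ v, (f v).2 = (f₀ v).2 + dr v := fun v => rfl
  -- separation principle
  have hsep : ∀ x, x ∈ E → ∀ y, y ∈ E → ∀ dx dy : ℝ, |dx| ≤ δ / 4 → |dy| ≤ δ / 4 →
      x + dx = y + dy → x = y := by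
    intro x hx y hy dx dy hdx hdy heq
    by_contra hne
    have hg := hgap x hx y hy hne
    have h1 : x - y = dy - dx := by linarith
    have h2 : |x - y| ≤ |dy| + |dx| := by
      rw [h1]
      calc |dy - dx| = |dy + (-dx)| := by ring_nf
      _ ≤ |dy| + |(-dx)| := abs_add_le _ _
      _ = |dy| + |dx| := by rw [abs_neg]
    have h3 : |dx| ≥ 0 := abs_nonneg _
    linarith
  -- code distinctness
  have hdl_inj : ∀ v w : V, dl v = dl w → v = w := by
    intro v w h
    rw [hdl] at h
    have h2 : ((2 * idx v + 1 : ℕ) : ℝ) = ((2 * idx w + 1 : ℕ) : ℝ) :=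
      mul_left_cancel₀ (ne_of_gt hε0) h
    have h3 : 2 * idx v + 1 = 2 * idx w + 1 := by exact_mod_cast h2
    exact hidx (by omega)
  have hdr_inj : ∀ v w : V, dr v = dr w → v = w := by
    intro v w h
    rw [hdr] at h
    have h2 : ((2 * idx v + 2 : ℕ) : ℝ) = ((2 * idx w + 2 : ℕ) : ℝ) :=
      mul_left_cancel₀ (ne_of_gt hε0) h
    have h3 : 2 * idx v + 2 = 2 * idx w + 2 := by exact_mod_cast h2
    exact hidx (by omega)
  have hdlr : ∀ v w : V, dl v ≠ dr w := by
    intro v w h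
    rw [hdl, hdr] at h
    have h2 : ((2 * idx v + 1 : ℕ) : ℝ) = ((2 * idx w + 2 : ℕ) : ℝ) :=
      mul_left_cancel₀ (ne_of_gt hε0) h
    have h3 : 2 * idx v + 1 = 2 * idx w + 2 := by exact_mod_cast h2
    omega
  refine ⟨f, ?_, ?_, ?_, ?_⟩
  · intro v
    rw [hf1, hf2]
    have := hdl_pos v
    have := hdr_pos v
    have := hprop v
    linarith
  · intro v w hvw
    have habs_l : ∀ u : V, |(-(dl u))| ≤ δ / 4 := by
      intro u
      rw [abs_neg, abs_of_pos (hdl_pos u)]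
      exact hdl_le u
    have habs_r : ∀ u : V, |dr u| ≤ δ / 4 := by
      intro u
      rw [abs_of_pos (hdr_pos u)]
      exact hdr_le u
    refine ⟨?_, ?_, ?_, ?_⟩
    · intro h
      rw [hf1, hf1] at h
      have heq : (f₀ v).1 + (-(dl v)) = (f₀ w).1 + (-(dl w)) := by linarith
      have hxy := hsep _ (hE1 v) _ (hE1 w) _ _ (habs_l v) (habs_l w) heq
      have : dl v = dl w := by linarith
      exact hvw (hdl_inj v w this)
    · intro h
      rw [hf1, hf2] at h
      have heq : (f₀ v).1 + (-(dl v)) = (f₀ w).2 + dr w := by linarith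
      have hxy := hsep _ (hE1 v) _ (hE2 w) _ _ (habs_l v) (habs_r w) heq
      have := hdl_pos v
      have := hdr_pos w
      linarith
    · intro h
      rw [hf2, hf1] at h
      have heq : (f₀ v).2 + dr v = (f₀ w).1 + (-(dl w)) := by linarith
      have hxy := hsep _ (hE2 v) _ (hE1 w) _ _ (habs_r v) (habs_l w) heq
      have := hdr_pos v
      have := hdl_pos w
      linarith
    · intro h
      rw [hf2, hf2] at h
      have heq : (f₀ v).2 + dr v = (f₀ w).2 + dr w := by linarith
      have hxy := hsep _ (hE2 v) _ (hE2 w) _ _ (habs_r v) (habs_r w) heq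
      have : dr v = dr w := by linarith
      exact hvw (hdr_inj v w this)
  · intro v
    rw [hf1, hf2]
    have := hdl_pos v
    have := hdr_pos v
    constructor <;> linarith
  · intro p
    rcases Finset.eq_empty_or_nonempty
      (Finset.univ.filter (fun v : V => (f v).1 ≤ p ∧ p ≤ (f v).2)) with hemp | hne
    · rw [hemp]
      simp
    · set S := Finset.univ.filter (fun v : V => (f v).1 ≤ p ∧ p ≤ (f v).2) with hS
      have hAne : (S.image (fun v => (f₀ v).1)).Nonempty := hne.image _
      set q := (S.image (fun v => (f₀ v).1)).max' hAne with hq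
      obtain ⟨u, huS, hqu⟩ := Finset.mem_image.mp
        ((S.image (fun v => (f₀ v).1)).max'_mem hAne)
      have hqmem : ∀ v ∈ S, (f₀ v).1 ≤ q ∧ q ≤ (f₀ v).2 := by
        intro v hvS
        constructor
        · rw [hq]
          exact Finset.le_max' _ _
            (Finset.mem_image_of_mem (fun v => (f₀ v).1) hvS)
        · by_contra hcon
          push_neg at hcon
          have hq2 : (f₀ v).2 < (f₀ u).1 := by rw [hqu]; exact hcon
          have hxy : (f₀ u).1 ≠ (f₀ v).2 := by intro h; rw [h] at hq2; linarith
          have hg := hgap _ (hE1 u) _ (hE2 v) hxy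
          rw [abs_of_pos (by linarith)] at hg
          obtain ⟨hu1, hu2⟩ := (Finset.mem_filter.mp huS).2
          obtain ⟨hv1, hv2⟩ := (Finset.mem_filter.mp hvS).2
          rw [hf1] at hu1
          rw [hf2] at hv2
          have h5 := hdl_le u
          have h6 := hdr_le v
          linarith
      calc S.card ≤ (Finset.univ.filter
            (fun v : V => (f₀ v).1 ≤ q ∧ q ≤ (f₀ v).2)).card := by
            apply Finset.card_le_card
            intro v hvS
            exact Finset.mem_filter.mpr ⟨Finset.mem_univ v, hqmem v hvS⟩
      _ ≤ B := hdepth q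

end TTreeProof


open TTreeProof

/-- interval representations of `t`-trees: every `t`-tree on `m ≥ 1`
vertices has an assignment of closed intervals (with pairwise distinct endpoints) to its
vertices such that intervals of adjacent vertices intersect and every point of `ℝ` lies
in at most `(t+1)·⌊log₃(2m+1) + 1⌋` intervals. -/
theorem ttree_interval_representation (t : ℕ) (ht : 1 ≤ t)
    {V : Type*} [Fintype V] (hm : 1 ≤ Fintype.card V)
    (H : SimpleGraph V) (hH : IsTTree t H) :
    ∃ f : V → ℝ × ℝ,
      (∀ v, (f v).1 < (f v).2) ∧
      (∀ v w, v ≠ w →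
        (f v).1 ≠ (f w).1 ∧ (f v).1 ≠ (f w).2 ∧
        (f v).2 ≠ (f w).1 ∧ (f v).2 ≠ (f w).2) ∧
      (∀ v w, H.Adj v w →
        (Set.Icc (f v).1 (f v).2 ∩ Set.Icc (f w).1 (f w).2).Nonempty) ∧
      (∀ p : ℝ, ({v | p ∈ Set.Icc (f v).1 (f v).2}.ncard : ℤ) ≤
        ((t : ℤ) + 1) * ⌊Real.logb 3 (2 * (Fintype.card V : ℝ) + 1) + 1⌋) := by
  classical
  obtain ⟨e, he⟩ := hH
  obtain ⟨K, hK1, hK2⟩ := logb_bound (Fintype.card V) hm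
  have hpar : ∀ i, parF H e i ≤ i := parF_le H e
  have hroot := rootedF H e
  have hbud : 2 * (Finset.range (Fintype.card V + 1)).card + 1 ≤ 3 ^ K := by
    rw [Finset.card_range]; exact hK1
  obtain ⟨g, hg⟩ := mainLemma hpar K _ 0 hroot hbud 0 1 (by norm_num)
  have hTne : ∀ v : V, (TvF H e v).Nonempty := fun v => ⟨_, mem_TvF_self H e v⟩
  have hnvr : ∀ v : V, idxF e v ∈ Finset.range (Fintype.card V + 1) :=
    fun v => TvF_subset H e v (mem_TvF_self H e v)
  set f₀ : V → ℝ × ℝ := fun v =>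
    (((TvF H e v).image (fun i => (g i).1)).min' ((hTne v).image _),
     ((TvF H e v).image (fun i => (g i).2)).max' ((hTne v).image _)) with hf₀
  have hf₀1 : ∀ v, (f₀ v).1
      = ((TvF H e v).image (fun i => (g i).1)).min' ((hTne v).image _) := fun v => rfl
  have hf₀2 : ∀ v, (f₀ v).2
      = ((TvF H e v).image (fun i => (g i).2)).max' ((hTne v).image _) := fun v => rfl
  have hlow : ∀ (v : V) (j : ℕ), j ∈ TvF H e v → (f₀ v).1 ≤ (g j).1 := by
    intro v j hj
    rw [hf₀1]
    exact Finset.min'_le _ _ (Finset.mem_image_of_mem (fun i => (g i).1) hj)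
  have hhigh : ∀ (v : V) (j : ℕ), j ∈ TvF H e v → (g j).2 ≤ (f₀ v).2 := by
    intro v j hj
    rw [hf₀2]
    exact Finset.le_max' _ _ (Finset.mem_image_of_mem (fun i => (g i).2) hj)
  have hstep : ∀ v : V, ∀ i ∈ TvF H e v, i ≠ idxF e v →
      parF H e i ∈ TvF H e v ∧ parF H e i < i :=
    fun v i hi hne => TvF_step e he hi hne
  have hcover : ∀ (v : V) (p : ℝ), (f₀ v).1 ≤ p → p ≤ (f₀ v).2 →
      ∃ j ∈ TvF H e v, (g j).1 ≤ p ∧ p ≤ (g j).2 := by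
    intro v p h1 h2
    obtain ⟨i₁, hi₁T, hi₁⟩ := Finset.mem_image.mp
      (((TvF H e v).image (fun i => (g i).1)).min'_mem ((hTne v).image _))
    obtain ⟨i₂, hi₂T, hi₂⟩ := Finset.mem_image.mp
      (((TvF H e v).image (fun i => (g i).2)).max'_mem ((hTne v).image _))
    have hA := walkA hg (TvF H e v) (TvF_subset H e v) (idxF e v) (hstep v) p i₁ hi₁T
      (by rw [hi₁, ← hf₀1]; exact h1)
    rcases hA with ⟨j, hj, hj1, hj2⟩ | hA
    · exact ⟨j, hj, hj1, hj2⟩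
    · have hB := walkB hg (TvF H e v) (TvF_subset H e v) (idxF e v) (hstep v) p i₂ hi₂T
        (by rw [hi₂, ← hf₀2]; exact h2)
      rcases hB with ⟨j, hj, hj1, hj2⟩ | hB
      · exact ⟨j, hj, hj1, hj2⟩
      · exact ⟨idxF e v, mem_TvF_self H e v, hA, hB⟩
  have hprop₀ : ∀ v, (f₀ v).1 < (f₀ v).2 := by
    intro v
    have h1 := hlow v _ (mem_TvF_self H e v)
    have h2 := hhigh v _ (mem_TvF_self H e v)
    have h3 := hg.proper (idxF e v) (hnvr v)
    linarith
  -- shared-bag lemma for edges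
  have hbag2 : ∀ a b : V, b ∈ nbF H e a →
      idxF e a ∈ TvF H e a ∧ idxF e a ∈ TvF H e b := by
    intro a b hb
    refine ⟨mem_TvF_self H e a, ?_⟩
    unfold TvF
    rw [Finset.mem_filter, Finset.mem_range]
    constructor
    · have := idxF_le e a; omega
    · rw [bagF_idx]
      exact Finset.mem_insert_of_mem hb
  have hedge₀ : ∀ v w : V, H.Adj v w →
      ∃ q : ℝ, ((f₀ v).1 ≤ q ∧ q ≤ (f₀ v).2) ∧ ((f₀ w).1 ≤ q ∧ q ≤ (f₀ w).2) := by
    have key : ∀ a b : V, b ∈ nbF H e a →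
        ∃ q : ℝ, ((f₀ a).1 ≤ q ∧ q ≤ (f₀ a).2) ∧ ((f₀ b).1 ≤ q ∧ q ≤ (f₀ b).2) := by
      intro a b hb
      obtain ⟨ha1, ha2⟩ := hbag2 a b hb
      have hrange : idxF e a ∈ Finset.range (Fintype.card V + 1) := hnvr a
      have hp := hg.proper _ hrange
      refine ⟨(g (idxF e a)).1, ⟨hlow a _ ha1, ?_⟩, ⟨hlow b _ ha2, ?_⟩⟩
      · exact le_trans (le_of_lt hp) (hhigh a _ ha1)
      · exact le_trans (le_of_lt hp) (hhigh b _ ha2)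
    intro v w hadj
    have hne : v ≠ w := hadj.ne
    rcases lt_trichotomy (e w) (e v) with hlt | heq | hlt
    · exact key v w ((mem_nbF H e).mpr ⟨hadj, hlt⟩)
    · exact absurd (e.injective heq) (Ne.symm hne)
    · obtain ⟨q, hq1, hq2⟩ := key w v ((mem_nbF H e).mpr ⟨hadj.symm, hlt⟩)
      exact ⟨q, hq2, hq1⟩
  have hdepth₀ : ∀ p : ℝ,
      (Finset.univ.filter (fun v : V => (f₀ v).1 ≤ p ∧ p ≤ (f₀ v).2)).card
        ≤ (t + 1) * K := by
    intro p
    have hsub : Finset.univ.filter (fun v : V => (f₀ v).1 ≤ p ∧ p ≤ (f₀ v).2) ⊆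
        ((Finset.range (Fintype.card V + 1)).filter
          (fun i => (g i).1 ≤ p ∧ p ≤ (g i).2)).biUnion (bagF H e) := by
      intro v hv
      obtain ⟨-, h1, h2⟩ := Finset.mem_filter.mp hv
      obtain ⟨j, hjT, hj1, hj2⟩ := hcover v p h1 h2
      apply Finset.mem_biUnion.mpr
      refine ⟨j, Finset.mem_filter.mpr ⟨TvF_subset H e v hjT, hj1, hj2⟩, ?_⟩
      exact (Finset.mem_filter.mp hjT).2
    calc (Finset.univ.filter (fun v : V => (f₀ v).1 ≤ p ∧ p ≤ (f₀ v).2)).card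
        ≤ (((Finset.range (Fintype.card V + 1)).filter
            (fun i => (g i).1 ≤ p ∧ p ≤ (g i).2)).biUnion (bagF H e)).card :=
          Finset.card_le_card hsub
    _ ≤ ((Finset.range (Fintype.card V + 1)).filter
            (fun i => (g i).1 ≤ p ∧ p ≤ (g i).2)).card * (t + 1) :=
          Finset.card_biUnion_le_card_mul _ _ _ (fun i _ => bagF_card e he i)
    _ ≤ K * (t + 1) := Nat.mul_le_mul_right _ (hg.depth p)
    _ = (t + 1) * K := Nat.mul_comm _ _
  obtain ⟨f, hfprop, hfdist, hfgrow, hfdepth⟩ := perturb f₀ ((t + 1) * K) hprop₀ hdepth₀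
    (idxF e) (idxF_inj e) (Fintype.card V + 1)
    (fun v => by have := idxF_le e v; omega) (by omega)
  refine ⟨f, hfprop, hfdist, ?_, ?_⟩
  · intro v w hadj
    obtain ⟨q, hq1, hq2⟩ := hedge₀ v w hadj
    refine ⟨q, ?_⟩
    rw [Set.mem_inter_iff, Set.mem_Icc, Set.mem_Icc]
    obtain ⟨gv1, gv2⟩ := hfgrow v
    obtain ⟨gw1, gw2⟩ := hfgrow w
    exact ⟨⟨by linarith [hq1.1], by linarith [hq1.2]⟩,
      ⟨by linarith [hq2.1], by linarith [hq2.2]⟩⟩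
  · intro p
    have hcount := hfdepth p
    have hncard : ({v | p ∈ Set.Icc (f v).1 (f v).2} : Set V).ncard
        = (Finset.univ.filter (fun v : V => (f v).1 ≤ p ∧ p ≤ (f v).2)).card := by
      rw [Set.ncard_eq_toFinset_card']
      congr 1
      ext v
      simp [Set.mem_Icc]
    rw [hncard, ← hK2]
    exact_mod_cast hcount
end
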